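/- arXiv:2603.11453 — 16 statements merged into one kernel-verified Lean document; each statement's English description precedes it below -/
import Mathlib

section
/- Let ρ ∈ (0,1), σ² > 0, c > 0, and δ ∈ [0,1). Then there exists a unique V > 0 satisfying 1/V² − δρ²/(ρ²V + σ²)² = 1/c. -/
/-- Strict "monotonicity at solutions": two distinct positive solutions of the FOC
are impossible. -/
lemma stmt_0_key (ρ σ2 c δ x y : ℝ) (hρ0 : 0 < ρ) (hσ : 0 < σ2) (hc : 0 < c) (hδ0 : 0 ≤ δ)
    (hx : 0 < x) (hy : 0 < y) (hxy : x < y)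
    (h1 : 1 / x ^ 2 - δ * ρ ^ 2 / (ρ ^ 2 * x + σ2) ^ 2 = 1 / c)
    (h2 : 1 / y ^ 2 - δ * ρ ^ 2 / (ρ ^ 2 * y + σ2) ^ 2 = 1 / c) : False := by
  have ha : (0:ℝ) < ρ ^ 2 * x + σ2 := by positivity
  have hb : (0:ℝ) < ρ ^ 2 * y + σ2 := by positivity
  have hA : δ * ρ ^ 2 * x ^ 2 < (ρ ^ 2 * x + σ2) ^ 2 := by
    have h1' : δ * ρ ^ 2 / (ρ ^ 2 * x + σ2) ^ 2 < 1 / x ^ 2 := by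
      have : (0:ℝ) < 1 / c := by positivity
      linarith
    rw [div_lt_div_iff₀ (by positivity) (by positivity)] at h1'
    nlinarith
  have hB : δ * ρ ^ 2 * y ^ 2 < (ρ ^ 2 * y + σ2) ^ 2 := by
    have h2' : δ * ρ ^ 2 / (ρ ^ 2 * y + σ2) ^ 2 < 1 / y ^ 2 := by
      have : (0:ℝ) < 1 / c := by positivity
      linarith
    rw [div_lt_div_iff₀ (by positivity) (by positivity)] at h2'
    nlinarith
  have heq : 1 / x ^ 2 - δ * ρ ^ 2 / (ρ ^ 2 * x + σ2) ^ 2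
      = 1 / y ^ 2 - δ * ρ ^ 2 / (ρ ^ 2 * y + σ2) ^ 2 := by rw [h1, h2]
  have hx2 : x ^ 2 ≠ 0 := by positivity
  have hy2 : y ^ 2 ≠ 0 := by positivity
  have ha2 : (ρ ^ 2 * x + σ2) ^ 2 ≠ 0 := by positivity
  have hb2 : (ρ ^ 2 * y + σ2) ^ 2 ≠ 0 := by positivity
  field_simp at heq
  have hyx : y - x ≠ 0 := by intro h; nlinarith
  have T : (y + x) * ((ρ ^ 2 * x + σ2) ^ 2 * (ρ ^ 2 * y + σ2) ^ 2)
      = δ * ρ ^ 4 * ((ρ ^ 2 * x + σ2) + (ρ ^ 2 * y + σ2)) * (x ^ 2 * y ^ 2) := by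
    have T' : (y - x) * ((y + x) * ((ρ ^ 2 * x + σ2) ^ 2 * (ρ ^ 2 * y + σ2) ^ 2)
        - δ * ρ ^ 4 * ((ρ ^ 2 * x + σ2) + (ρ ^ 2 * y + σ2)) * (x ^ 2 * y ^ 2)) = 0 := by
      linear_combination heq
    rcases mul_eq_zero.mp T' with h | h
    · exact absurd h hyx
    · linarith
  have hax : ρ ^ 2 * x < ρ ^ 2 * x + σ2 := by linarith
  have hby : ρ ^ 2 * y < ρ ^ 2 * y + σ2 := by linarith
  have h3 : (δ * ρ ^ 2 * x ^ 2) * (ρ ^ 2 * y) < (ρ ^ 2 * x + σ2) ^ 2 * (ρ ^ 2 * y + σ2) :=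
    mul_lt_mul'' hA hby (by positivity) (by positivity)
  have h4 : (ρ ^ 2 * x) * (δ * ρ ^ 2 * y ^ 2) < (ρ ^ 2 * x + σ2) * (ρ ^ 2 * y + σ2) ^ 2 :=
    mul_lt_mul'' hax hB (by positivity) (by positivity)
  nlinarith [mul_pos (mul_pos ha hx) (sub_pos.mpr h4),
    mul_pos (mul_pos hb hy) (sub_pos.mpr h3)]

/-- Let ρ ∈ (0,1), σ² > 0, c > 0, and δ ∈ [0,1). Then there exists a
unique V > 0 satisfying 1/V² − δρ²/(ρ²V + σ²)² = 1/c. -/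
theorem stmt_0 (ρ σ2 c δ : ℝ) (hρ0 : 0 < ρ) (hρ1 : ρ < 1) (hσ : 0 < σ2)
    (hc : 0 < c) (hδ0 : 0 ≤ δ) (hδ1 : δ < 1) :
    ∃! V : ℝ, 0 < V ∧ 1 / V ^ 2 - δ * ρ ^ 2 / (ρ ^ 2 * V + σ2) ^ 2 = 1 / c := by
  -- Existence via the intermediate value theorem
  set f : ℝ → ℝ := fun V => 1 / V ^ 2 - δ * ρ ^ 2 / (ρ ^ 2 * V + σ2) ^ 2 with hf
  set r := Real.sqrt c with hrdef
  have hr : 0 < r := Real.sqrt_pos.mpr hc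
  have hr2 : r ^ 2 = c := Real.sq_sqrt hc.le
  set M := 1 / c + δ * ρ ^ 2 / σ2 ^ 2 with hMdef
  have hM : 0 < M := by positivity
  set v := min r (1 / Real.sqrt M) with hvdef
  have hv : 0 < v := lt_min hr (by positivity)
  have hvr : v ≤ r := min_le_left _ _
  have hvM : v ^ 2 ≤ 1 / M := by
    have h1 : v ≤ 1 / Real.sqrt M := min_le_right _ _
    calc v ^ 2 ≤ (1 / Real.sqrt M) ^ 2 := by gcongr
      _ = 1 / M := by rw [div_pow, one_pow, Real.sq_sqrt hM.le]
  have h1v : M ≤ 1 / v ^ 2 := by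
    rw [le_div_iff₀ (by positivity)]
    calc M * v ^ 2 ≤ M * (1 / M) := by gcongr
      _ = 1 := mul_one_div_cancel hM.ne'
  have hfv : 1 / c ≤ f v := by
    have hd : δ * ρ ^ 2 / (ρ ^ 2 * v + σ2) ^ 2 ≤ δ * ρ ^ 2 / σ2 ^ 2 := by
      rw [div_le_div_iff₀ (by positivity) (by positivity)]
      nlinarith [mul_nonneg (mul_nonneg hδ0 (sq_nonneg ρ))
        (mul_nonneg (mul_nonneg (sq_nonneg ρ) hv.le) (by positivity : (0:ℝ) ≤ ρ ^ 2 * v + 2 * σ2))]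
    simp only [hf]
    have : 1 / c = M - δ * ρ ^ 2 / σ2 ^ 2 := by rw [hMdef]; ring
    rw [this]
    linarith
  have hfr : f r ≤ 1 / c := by
    simp only [hf]
    have h1 : 1 / r ^ 2 = 1 / c := by rw [hr2]
    have h2 : 0 ≤ δ * ρ ^ 2 / (ρ ^ 2 * r + σ2) ^ 2 := by positivity
    linarith
  have hcont : ContinuousOn f (Set.Icc v r) := by
    apply ContinuousOn.sub
    · exact continuousOn_const.div ((continuous_pow 2).continuousOn)
        (fun V hV => pow_ne_zero _ (ne_of_gt (lt_of_lt_of_le hv hV.1)))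
    · exact continuousOn_const.div (Continuous.continuousOn (by continuity))
        (fun V hV => pow_ne_zero _ (by have := lt_of_lt_of_le hv hV.1; positivity))
  have hsub := intermediate_value_Icc' hvr hcont
  obtain ⟨V, hVmem, hfV⟩ := hsub ⟨hfr, hfv⟩
  have hV0 : 0 < V := lt_of_lt_of_le hv hVmem.1
  refine ⟨V, ⟨hV0, hfV⟩, ?_⟩
  rintro y ⟨hy0, hy⟩
  rcases lt_trichotomy y V with h | h | h
  · exact (stmt_0_key ρ σ2 c δ y V hρ0 hσ hc hδ0 hy0 hV0 h hy hfV).elim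
  · exact h
  · exact (stmt_0_key ρ σ2 c δ V y hρ0 hσ hc hδ0 hV0 hy0 h hfV hy).elim
end

section
/- Let ρ ∈ (0,1), σ² > 0, and δ ∈ [0,1), and define f(V) = 1/V² − δρ²/(ρ²V + σ²)² for V > 0. If 0 < V₁ < V₂ and f(V₂) > 0, then f(V₁) > f(V₂). In particular, f is strictly decreasing on the set where it is positive. -/
/-- With f(V) = 1/V² − δρ²/(ρ²V + σ²)², if 0 < V₁ < V₂ and f(V₂) > 0,
then f(V₁) > f(V₂); i.e., f is strictly decreasing where it is positive. -/
theorem stmt_1 (ρ σ2 δ : ℝ) (hρ0 : 0 < ρ) (hρ1 : ρ < 1) (hσ : 0 < σ2)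
    (hδ0 : 0 ≤ δ) (hδ1 : δ < 1)
    (f : ℝ → ℝ) (hf : ∀ V : ℝ, f V = 1 / V ^ 2 - δ * ρ ^ 2 / (ρ ^ 2 * V + σ2) ^ 2)
    (V₁ V₂ : ℝ) (hV₁ : 0 < V₁) (h12 : V₁ < V₂) (hpos : 0 < f V₂) :
    f V₂ < f V₁ := by
  have hV₂ : 0 < V₂ := hV₁.trans h12
  have hA₁ : 0 < ρ ^ 2 * V₁ + σ2 := by positivity
  have hA₂ : 0 < ρ ^ 2 * V₂ + σ2 := by positivity
  rw [hf] at hpos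
  have key : δ * ρ ^ 2 * V₂ ^ 2 < (ρ ^ 2 * V₂ + σ2) ^ 2 := by
    have h1 : δ * ρ ^ 2 / (ρ ^ 2 * V₂ + σ2) ^ 2 < 1 / V₂ ^ 2 := by linarith
    rw [div_lt_div_iff₀ (by positivity) (by positivity)] at h1
    linarith
  rw [hf V₁, hf V₂, sub_lt_sub_iff]
  rw [div_add_div _ _ (by positivity : (V₂:ℝ) ^ 2 ≠ 0) (by positivity : ((ρ^2*V₁+σ2):ℝ) ^ 2 ≠ 0),
      div_add_div _ _ (by positivity : (V₁:ℝ) ^ 2 ≠ 0) (by positivity : ((ρ^2*V₂+σ2):ℝ) ^ 2 ≠ 0),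
      div_lt_div_iff₀ (by positivity) (by positivity)]
  have h2 : ρ^2*V₁^2*(ρ^2*(V₁+V₂)+2*σ2) < (ρ^2*V₁+σ2)^2*(V₁+V₂) := by
    nlinarith [mul_pos (mul_pos hρ0 hρ0) (mul_pos hσ (mul_pos hV₁ hV₂)),
      mul_pos (mul_pos hσ hσ) (add_pos hV₁ hV₂)]
  have h3 : δ*ρ^2*V₂^2 * (ρ^2*V₁^2*(ρ^2*(V₁+V₂)+2*σ2)) <
      (ρ^2*V₂+σ2)^2 * ((ρ^2*V₁+σ2)^2*(V₁+V₂)) := by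
    calc δ*ρ^2*V₂^2 * (ρ^2*V₁^2*(ρ^2*(V₁+V₂)+2*σ2))
        ≤ (ρ^2*V₂+σ2)^2 * (ρ^2*V₁^2*(ρ^2*(V₁+V₂)+2*σ2)) := by
          apply mul_le_mul_of_nonneg_right key.le; positivity
      _ < (ρ^2*V₂+σ2)^2 * ((ρ^2*V₁+σ2)^2*(V₁+V₂)) := by
          exact mul_lt_mul_of_pos_left h2 (by positivity)
  nlinarith [mul_pos (sub_pos.2 h12) (sub_pos.2 h3)]
end

section
/- Let ρ ∈ (0,1), σ² > 0, c > 0, and δ ∈ [0,1), let V* > 0 satisfy 1/(V*)² − δρ²/(ρ²V* + σ²)² = 1/c, and let x* = 1/V* − 1/(ρ²V* + σ²). Then x* > 0 if and only if c < σ⁴/((1 − δρ²)(1 − ρ²)²). -/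
set_option maxHeartbeats 800000


/-- The steady-state precision x* = 1/V* − 1/(ρ²V* + σ²) is strictly
positive if and only if c < σ⁴/((1 − δρ²)(1 − ρ²)²). -/
theorem stmt_5 (ρ σ2 c δ : ℝ) (hρ0 : 0 < ρ) (hρ1 : ρ < 1) (hσ : 0 < σ2)
    (hc : 0 < c) (hδ0 : 0 ≤ δ) (hδ1 : δ < 1)
    (V : ℝ) (hV : 0 < V)
    (hfoc : 1 / V ^ 2 - δ * ρ ^ 2 / (ρ ^ 2 * V + σ2) ^ 2 = 1 / c)
    (x : ℝ) (hx : x = 1 / V - 1 / (ρ ^ 2 * V + σ2)) :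
    0 < x ↔ c < σ2 ^ 2 / ((1 - δ * ρ ^ 2) * (1 - ρ ^ 2) ^ 2) := by
  have hA : 0 < ρ ^ 2 * V + σ2 := by positivity
  have h1ρ : 0 < 1 - ρ ^ 2 := by nlinarith
  have hD : 0 < 1 - δ * ρ ^ 2 := by nlinarith
  have hDen : 0 < (1 - δ * ρ ^ 2) * (1 - ρ ^ 2) ^ 2 := by positivity
  -- cleared-denominator form of the FOC
  have hfoc' : c * ((ρ ^ 2 * V + σ2) ^ 2 - δ * ρ ^ 2 * V ^ 2)
      = V ^ 2 * (ρ ^ 2 * V + σ2) ^ 2 := by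
    have hV2 : (V:ℝ) ^ 2 ≠ 0 := by positivity
    have hA2 : ((ρ ^ 2 * V + σ2) ^ 2 : ℝ) ≠ 0 := by positivity
    have hc' : (c:ℝ) ≠ 0 := ne_of_gt hc
    field_simp at hfoc
    nlinarith [hfoc]
  have hE : 0 < (ρ ^ 2 * V + σ2) ^ 2 - δ * ρ ^ 2 * V ^ 2 := by
    nlinarith [hfoc', mul_pos (pow_pos hV 2) (pow_pos hA 2)]
  -- the positive cofactor
  have hQid : (σ2 + (1 - ρ ^ 2) * V) * (ρ ^ 2 * V + σ2) ^ 2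
      - δ * ρ ^ 4 * (σ2 + (1 - ρ ^ 2) * (ρ ^ 2 * V + σ2)) * V ^ 2
      = (1 - ρ ^ 2) ^ 2 * ρ ^ 4 * V ^ 3 + 2 * ρ ^ 2 * V * σ2 ^ 2
        + (1 - ρ ^ 2) * (2 - ρ ^ 2) * ρ ^ 2 * V ^ 2 * σ2 + σ2 ^ 3
        + (1 - ρ ^ 2) * σ2 ^ 2 * V
        + (1 - δ) * ρ ^ 4 * (σ2 + (1 - ρ ^ 2) * (ρ ^ 2 * V + σ2)) * V ^ 2 := by
    ring
  have hQ : 0 < (σ2 + (1 - ρ ^ 2) * V) * (ρ ^ 2 * V + σ2) ^ 2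
      - δ * ρ ^ 4 * (σ2 + (1 - ρ ^ 2) * (ρ ^ 2 * V + σ2)) * V ^ 2 := by
    rw [hQid]
    have h2ρ : 0 < 2 - ρ ^ 2 := by nlinarith
    have h1δ : 0 < 1 - δ := by linarith
    positivity
  -- key factorization
  have hP : (σ2 - (1 - ρ ^ 2) * V) *
      ((σ2 + (1 - ρ ^ 2) * V) * (ρ ^ 2 * V + σ2) ^ 2
        - δ * ρ ^ 4 * (σ2 + (1 - ρ ^ 2) * (ρ ^ 2 * V + σ2)) * V ^ 2)
      = ((ρ ^ 2 * V + σ2) ^ 2 - δ * ρ ^ 2 * V ^ 2) *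
        (σ2 ^ 2 - c * ((1 - δ * ρ ^ 2) * (1 - ρ ^ 2) ^ 2)) := by
    linear_combination ((1 - δ * ρ ^ 2) * (1 - ρ ^ 2) ^ 2) * hfoc'
  have hx' : 0 < x ↔ (1 - ρ ^ 2) * V < σ2 := by
    rw [hx, sub_pos, div_lt_div_iff₀ hA hV]
    constructor <;> intro h <;> linarith
  rw [hx', lt_div_iff₀ hDen]
  constructor
  · intro h
    have h1 : 0 < (σ2 - (1 - ρ ^ 2) * V) *
        ((σ2 + (1 - ρ ^ 2) * V) * (ρ ^ 2 * V + σ2) ^ 2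
          - δ * ρ ^ 4 * (σ2 + (1 - ρ ^ 2) * (ρ ^ 2 * V + σ2)) * V ^ 2) :=
      mul_pos (by linarith) hQ
    rw [hP] at h1
    by_contra h2
    push_neg at h2
    have h3 : σ2 ^ 2 - c * ((1 - δ * ρ ^ 2) * (1 - ρ ^ 2) ^ 2) ≤ 0 := by linarith
    nlinarith [mul_nonpos_of_nonneg_of_nonpos hE.le h3]
  · intro h
    have h1 : 0 < ((ρ ^ 2 * V + σ2) ^ 2 - δ * ρ ^ 2 * V ^ 2) *
        (σ2 ^ 2 - c * ((1 - δ * ρ ^ 2) * (1 - ρ ^ 2) ^ 2)) :=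
      mul_pos hE (by linarith)
    rw [← hP] at h1
    by_contra h2
    push_neg at h2
    have h3 : σ2 - (1 - ρ ^ 2) * V ≤ 0 := by linarith
    nlinarith [mul_nonpos_of_nonpos_of_nonneg h3 hQ.le]
end

section
/- Let ρ ∈ (0,1), σ² > 0, c > 0, and δ ∈ [0,1), and let V* > 0 satisfy 1/(V*)² − δρ²/(ρ²V* + σ²)² = 1/c. Then V* < σ²/(1 − ρ²) if and only if c < σ⁴/((1 − δρ²)(1 − ρ²)²). -/
set_option maxHeartbeats 1000000


/-- V* < σ²/(1 − ρ²) if and only if c < σ⁴/((1 − δρ²)(1 − ρ²)²). -/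
theorem stmt_6 (ρ σ2 c δ : ℝ) (hρ0 : 0 < ρ) (hρ1 : ρ < 1) (hσ : 0 < σ2)
    (hc : 0 < c) (hδ0 : 0 ≤ δ) (hδ1 : δ < 1)
    (V : ℝ) (hV : 0 < V)
    (hfoc : 1 / V ^ 2 - δ * ρ ^ 2 / (ρ ^ 2 * V + σ2) ^ 2 = 1 / c) :
    V < σ2 / (1 - ρ ^ 2) ↔ c < σ2 ^ 2 / ((1 - δ * ρ ^ 2) * (1 - ρ ^ 2) ^ 2) := by
  obtain ⟨A, hA⟩ : ∃ A : ℝ, A = ρ ^ 2 * V + σ2 := ⟨_, rfl⟩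
  have hρ2 : (0:ℝ) < ρ ^ 2 := by positivity
  have hρ2lt : ρ ^ 2 < 1 := by nlinarith
  have h1p : (0:ℝ) < 1 - ρ ^ 2 := by linarith
  have hApos : (0:ℝ) < A := by rw [hA]; positivity
  have h1dp : (0:ℝ) < 1 - δ * ρ ^ 2 := by nlinarith
  -- cleared FOC
  have hE : c * (A ^ 2 - δ * ρ ^ 2 * V ^ 2) = V ^ 2 * A ^ 2 := by
    rw [hA]
    have hV2 : (V:ℝ) ^ 2 ≠ 0 := by positivity
    have hA2 : ((ρ ^ 2 * V + σ2):ℝ) ^ 2 ≠ 0 := by positivity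
    have hc' : (c:ℝ) ≠ 0 := ne_of_gt hc
    field_simp at hfoc
    nlinarith [hfoc]
  -- positivity of denominator-like term
  have hD : (0:ℝ) < A ^ 2 - δ * ρ ^ 2 * V ^ 2 := by
    by_contra h
    push_neg at h
    have h0 : V ^ 2 * A ^ 2 ≤ 0 := by
      calc V ^ 2 * A ^ 2 = c * (A ^ 2 - δ * ρ ^ 2 * V ^ 2) := hE.symm
        _ ≤ 0 := mul_nonpos_of_nonneg_of_nonpos (le_of_lt hc) h
    have := mul_pos (pow_pos hV 2) (pow_pos hApos 2)
    linarith
  -- the key factor Q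
  obtain ⟨Q, hQdef⟩ : ∃ Q : ℝ,
      Q = A ^ 2 * (σ2 + (1 - ρ ^ 2) * V) - δ * ρ ^ 4 * V ^ 2 * (σ2 + (1 - ρ ^ 2) * A) :=
    ⟨_, rfl⟩
  have hQ : 0 < Q := by
    have h1 : δ * ρ ^ 4 * V ^ 2 * σ2 < A ^ 2 * σ2 := by
      have hd4 : δ * ρ ^ 4 * V ^ 2 < A ^ 2 := by
        rw [hA]
        nlinarith [mul_pos (mul_pos hρ2 hV) hσ, sq_nonneg (ρ ^ 2 * V), sq_nonneg σ2,
          mul_nonneg (mul_nonneg hδ0 (sq_nonneg (ρ ^ 2))) (sq_nonneg V)]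
      nlinarith [hd4, hσ]
    have hle : δ * ρ ^ 4 * V ≤ ρ ^ 2 * A := by
      rw [hA]
      nlinarith [mul_nonneg (mul_nonneg (sub_nonneg.mpr hδ1.le) (pow_pos hρ2 2).le) hV.le,
        mul_pos hρ2 hσ]
    have h2 : δ * ρ ^ 4 * V ^ 2 * ((1 - ρ ^ 2) * A) ≤ A ^ 2 * ((1 - ρ ^ 2) * V) := by
      have hmul := mul_le_mul_of_nonneg_right hle
        (le_of_lt (mul_pos (mul_pos hV h1p) hApos))
      nlinarith [hmul, mul_nonneg (mul_nonneg (mul_nonneg h1p.le hV.le)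
        (sq_nonneg A)) (sub_nonneg.mpr hρ2lt.le)]
    rw [hQdef]
    linarith
  -- the polynomial identity
  have hP : σ2 ^ 2 * (A ^ 2 - δ * ρ ^ 2 * V ^ 2)
      - (1 - δ * ρ ^ 2) * (1 - ρ ^ 2) ^ 2 * (V ^ 2 * A ^ 2)
      = (σ2 - (1 - ρ ^ 2) * V) * Q := by
    rw [hQdef, hA]; ring
  have hMpos : (0:ℝ) < (1 - δ * ρ ^ 2) * (1 - ρ ^ 2) ^ 2 := by positivity
  constructor
  · intro h
    have hlt : (1 - ρ ^ 2) * V < σ2 := by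
      have := (lt_div_iff₀ h1p).mp h
      linarith
    have hpos : 0 < (σ2 - (1 - ρ ^ 2) * V) * Q := mul_pos (by linarith) hQ
    have h3 : (1 - δ * ρ ^ 2) * (1 - ρ ^ 2) ^ 2 * (V ^ 2 * A ^ 2)
        < σ2 ^ 2 * (A ^ 2 - δ * ρ ^ 2 * V ^ 2) := by linarith [hP, hpos]
    rw [← hE] at h3
    have h4 : c * ((1 - δ * ρ ^ 2) * (1 - ρ ^ 2) ^ 2) * (A ^ 2 - δ * ρ ^ 2 * V ^ 2)
        < σ2 ^ 2 * (A ^ 2 - δ * ρ ^ 2 * V ^ 2) := by ring_nf; ring_nf at h3; linarith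
    have key := (mul_lt_mul_iff_of_pos_right hD).mp h4
    exact (lt_div_iff₀ hMpos).mpr key
  · intro h
    have key : c * ((1 - δ * ρ ^ 2) * (1 - ρ ^ 2) ^ 2) < σ2 ^ 2 :=
      (lt_div_iff₀ hMpos).mp h
    have h4 := mul_lt_mul_of_pos_right key hD
    have h3 : (1 - δ * ρ ^ 2) * (1 - ρ ^ 2) ^ 2 * (V ^ 2 * A ^ 2)
        < σ2 ^ 2 * (A ^ 2 - δ * ρ ^ 2 * V ^ 2) := by
      rw [← hE]; ring_nf; ring_nf at h4; linarith
    have hpos : 0 < (σ2 - (1 - ρ ^ 2) * V) * Q := by linarith [hP]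
    have h5 : 0 < σ2 - (1 - ρ ^ 2) * V := by
      by_contra hcon
      push_neg at hcon
      nlinarith [mul_nonpos_of_nonpos_of_nonneg hcon hQ.le]
    rw [lt_div_iff₀ h1p]
    linarith
end

section
/- Let ρ ∈ (0,1), σ₀² ≥ 0, σ² > 0, c > 0, and δ ∈ [0,1) with c < σ⁴/((1 − δρ²)(1 − ρ²)²), and let V* > 0 satisfy 1/(V*)² − δρ²/(ρ²V* + σ²)² = 1/c. Define sequences (P_t)_{t≥1} and (V_t)_{t≥1} by P₁ = ρ²σ₀² + σ², V_t = min{P_t, V*}, and P_{t+1} = ρ²V_t + σ². Then there exists t* ∈ ℕ such that V_t = V* for all t ≥ t*. -/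
set_option maxHeartbeats 800000


/-- Under assumption (8), the optimal learning dynamics
P₁ = ρ²σ₀² + σ², V_t = min{P_t, V*}, P_{t+1} = ρ²V_t + σ² reach the steady state:
there exists t* such that V_t = V* for all t ≥ t*. -/
theorem stmt_7 (ρ σ0sq σ2 c δ : ℝ) (hρ0 : 0 < ρ) (hρ1 : ρ < 1) (hσ0 : 0 ≤ σ0sq)
    (hσ : 0 < σ2) (hc : 0 < c) (hδ0 : 0 ≤ δ) (hδ1 : δ < 1)
    (hcost : c < σ2 ^ 2 / ((1 - δ * ρ ^ 2) * (1 - ρ ^ 2) ^ 2))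
    (Vstar : ℝ) (hVstar : 0 < Vstar)
    (hfoc : 1 / Vstar ^ 2 - δ * ρ ^ 2 / (ρ ^ 2 * Vstar + σ2) ^ 2 = 1 / c)
    (P V : ℕ → ℝ)
    (hP1 : P 1 = ρ ^ 2 * σ0sq + σ2)
    (hV : ∀ t ≥ 1, V t = min (P t) Vstar)
    (hPstep : ∀ t ≥ 1, P (t + 1) = ρ ^ 2 * V t + σ2) :
    ∃ tstar : ℕ, ∀ t ≥ tstar, V t = Vstar := by
  have hρ2 : 0 < ρ ^ 2 := by positivity
  have hρ2lt : ρ ^ 2 < 1 := by nlinarith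
  have hδρ : 0 < 1 - δ * ρ ^ 2 := by nlinarith
  have h1ρ : 0 < 1 - ρ ^ 2 := by linarith
  -- Key: (1-ρ²) * Vstar < σ2
  have hkey : (1 - ρ ^ 2) * Vstar < σ2 := by
    by_contra h
    push_neg at h
    set L := ρ ^ 2 * Vstar + σ2 with hL
    have hLpos : 0 < L := by positivity
    have hLle : L ≤ Vstar := by rw [hL]; nlinarith
    -- δρ²/Vstar² ≤ δρ²/L²
    have h2 : δ * ρ ^ 2 / Vstar ^ 2 ≤ δ * ρ ^ 2 / L ^ 2 := by
      apply div_le_div_of_nonneg_left (by positivity) (by positivity)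
      nlinarith
    have hgup : 1 / c ≤ (1 - δ * ρ ^ 2) / Vstar ^ 2 := by
      rw [← hfoc]
      have : (1 - δ * ρ ^ 2) / Vstar ^ 2 = 1 / Vstar ^ 2 - δ * ρ ^ 2 / Vstar ^ 2 := by
        field_simp
      rw [this]; linarith
    -- (1-δρ²)/Vstar² ≤ (1-δρ²)(1-ρ²)²/σ⁴ since Vstar ≥ σ²/(1-ρ²)
    have hVsq : σ2 ^ 2 ≤ (1 - ρ ^ 2) ^ 2 * Vstar ^ 2 := by nlinarith
    have hgdown : (1 - δ * ρ ^ 2) / Vstar ^ 2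
        ≤ (1 - δ * ρ ^ 2) * (1 - ρ ^ 2) ^ 2 / σ2 ^ 2 := by
      rw [div_le_div_iff₀ (by positivity) (by positivity)]
      nlinarith
    -- but hcost says 1/c > (1-δρ²)(1-ρ²)²/σ⁴
    have hcost' : c * ((1 - δ * ρ ^ 2) * (1 - ρ ^ 2) ^ 2) < σ2 ^ 2 :=
      (lt_div_iff₀ (by positivity)).mp hcost
    have hclt : (1 - δ * ρ ^ 2) * (1 - ρ ^ 2) ^ 2 / σ2 ^ 2 < 1 / c := by
      rw [div_lt_div_iff₀ (by positivity) hc, one_mul]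
      nlinarith [hcost']
    linarith
  set ε := σ2 - (1 - ρ ^ 2) * Vstar with hε
  have hεpos : 0 < ε := by rw [hε]; linarith
  -- absorbing: once V t = Vstar, stays
  have absorb : ∀ t, 1 ≤ t → V t = Vstar → V (t + 1) = Vstar := by
    intro t ht hVt
    have hP' : P (t + 1) = ρ ^ 2 * Vstar + σ2 := by rw [hPstep t ht, hVt]
    have hge : Vstar ≤ P (t + 1) := by rw [hP']; nlinarith
    rw [hV (t + 1) (by omega), min_eq_right hge]
  -- existence of some t ≥ 1 with V t = Vstar
  have hexist : ∃ t, 1 ≤ t ∧ V t = Vstar := by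
    by_contra h
    push_neg at h
    have hlt : ∀ t, 1 ≤ t → P t < Vstar ∧ V t = P t := by
      intro t ht
      rcases lt_or_ge (P t) Vstar with h1 | h1
      · exact ⟨h1, by rw [hV t ht, min_eq_left h1.le]⟩
      · exact absurd (by rw [hV t ht, min_eq_right h1]) (h t ht)
    have grow : ∀ n : ℕ, (n : ℝ) * ε ≤ P (n + 1) - P 1 := by
      intro n
      induction n with
      | zero => simp
      | succ k ih =>
        have hk1 : 1 ≤ k + 1 := by omega
        obtain ⟨hPlt, hVeq⟩ := hlt (k + 1) hk1
        have hstep : P (k + 1 + 1) = ρ ^ 2 * P (k + 1) + σ2 := by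
          rw [hPstep (k + 1) hk1, hVeq]
        have hinc : P (k + 1) + ε ≤ P (k + 1 + 1) := by
          rw [hstep, hε]; nlinarith
        push_cast
        linarith
    obtain ⟨n, hn⟩ := Archimedean.arch (Vstar - P 1) hεpos
    have h1 : Vstar - P 1 ≤ (n : ℝ) * ε := by simpa [nsmul_eq_mul] using hn
    have h2 := grow (n + 1)
    have h3 := (hlt (n + 1 + 1) (by omega)).1
    push_cast at h2
    nlinarith
  obtain ⟨t0, ht0, hVt0⟩ := hexist
  refine ⟨t0, fun t ht => ?_⟩
  induction t with
  | zero => omega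
  | succ k ih =>
    rcases Nat.lt_or_ge t0 (k + 1) with h1 | h1
    · have hk : t0 ≤ k := by omega
      exact absorb k (by omega) (ih hk)
    · have : t0 = k + 1 := by omega
      rw [← this]; exact hVt0
end

section
/- Let σ² > 0, c > 0, δ ∈ (0,1), and define ρ* = sqrt(δ/8 + sqrt(δ²/64 + σ⁴/c)). Let 0 < ρ₁ < ρ₂ < 1 with ρ₂ ≤ ρ*, and for i = 1,2 let V_i > 0 satisfy 1/(V_i)² − δρ_i²/(ρ_i²V_i + σ²)² = 1/c. Then V₁ > V₂; that is, the steady-state posterior variance is strictly decreasing in the autocorrelation on (0, min{ρ*, 1}). -/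
set_option maxHeartbeats 4000000 in
/-- The steady-state posterior variance is strictly decreasing in the
autocorrelation ρ on (0, min{ρ*, 1}), where ρ* = √(δ/8 + √(δ²/64 + σ⁴/c)). -/
theorem stmt_8 (σ2 c δ : ℝ) (hσ : 0 < σ2) (hc : 0 < c) (hδ0 : 0 < δ) (hδ1 : δ < 1)
    (ρstar : ℝ)
    (hρstar : ρstar = Real.sqrt (δ / 8 + Real.sqrt (δ ^ 2 / 64 + σ2 ^ 2 / c)))
    (ρ₁ ρ₂ : ℝ) (hρ₁ : 0 < ρ₁) (h12 : ρ₁ < ρ₂) (hρ₂ : ρ₂ < 1) (hle : ρ₂ ≤ ρstar)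
    (V₁ V₂ : ℝ) (hV₁ : 0 < V₁) (hV₂ : 0 < V₂)
    (hfoc₁ : 1 / V₁ ^ 2 - δ * ρ₁ ^ 2 / (ρ₁ ^ 2 * V₁ + σ2) ^ 2 = 1 / c)
    (hfoc₂ : 1 / V₂ ^ 2 - δ * ρ₂ ^ 2 / (ρ₂ ^ 2 * V₂ + σ2) ^ 2 = 1 / c) :
    V₂ < V₁ := by
  have hρ₂0 : 0 < ρ₂ := lt_trans hρ₁ h12
  have hA₂ : 0 < ρ₂ ^ 2 * V₂ + σ2 := by positivity
  have hA₁ : 0 < ρ₂ ^ 2 * V₁ + σ2 := by positivity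
  have hB₁ : 0 < ρ₁ ^ 2 * V₁ + σ2 := by positivity
  -- clear denominators in a copy of hfoc₂
  have hE : c * ((ρ₂ ^ 2 * V₂ + σ2) ^ 2 - δ * ρ₂ ^ 2 * V₂ ^ 2)
      = V₂ ^ 2 * (ρ₂ ^ 2 * V₂ + σ2) ^ 2 := by
    have h1 : V₂ ≠ 0 := ne_of_gt hV₂
    have h2 : (ρ₂ ^ 2 * V₂ + σ2) ≠ 0 := ne_of_gt hA₂
    have h3 : c ≠ 0 := ne_of_gt hc
    have h := hfoc₂
    field_simp at h
    linarith [h]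
  have hD : 0 < (ρ₂ ^ 2 * V₂ + σ2) ^ 2 - δ * ρ₂ ^ 2 * V₂ ^ 2 := by
    nlinarith [hE, mul_pos (pow_pos hV₂ 2) (pow_pos hA₂ 2), hc]
  have hII : δ * (ρ₂ ^ 2 * V₂) ^ 2 < ρ₂ ^ 2 * (ρ₂ ^ 2 * V₂ + σ2) ^ 2 := by
    nlinarith [mul_pos (pow_pos hρ₂0 2) hD]
  -- ρ* facts, scoped so sqrt terms don't pollute the context
  have hK : ρ₂ ^ 4 - δ * ρ₂ ^ 2 / 4 ≤ σ2 ^ 2 / c := by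
    have hs1nn : (0:ℝ) ≤ δ ^ 2 / 64 + σ2 ^ 2 / c := by positivity
    have hs1sq : (Real.sqrt (δ ^ 2 / 64 + σ2 ^ 2 / c)) ^ 2 = δ ^ 2 / 64 + σ2 ^ 2 / c :=
      Real.sq_sqrt hs1nn
    have hs1nn' : 0 ≤ Real.sqrt (δ ^ 2 / 64 + σ2 ^ 2 / c) := Real.sqrt_nonneg _
    have hs1ge : δ / 8 ≤ Real.sqrt (δ ^ 2 / 64 + σ2 ^ 2 / c) := by
      have h : (δ / 8) ^ 2 ≤ δ ^ 2 / 64 + σ2 ^ 2 / c := by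
        have : (0:ℝ) ≤ σ2 ^ 2 / c := by positivity
        nlinarith [this]
      have h2 := Real.sqrt_le_sqrt h
      rwa [Real.sqrt_sq (by positivity : (0:ℝ) ≤ δ / 8)] at h2
    have hargnn : (0:ℝ) ≤ δ / 8 + Real.sqrt (δ ^ 2 / 64 + σ2 ^ 2 / c) := by positivity
    have hρsq : ρ₂ ^ 2 ≤ δ / 8 + Real.sqrt (δ ^ 2 / 64 + σ2 ^ 2 / c) := by
      have h1 : ρstar ^ 2 = δ / 8 + Real.sqrt (δ ^ 2 / 64 + σ2 ^ 2 / c) := by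
        rw [hρstar]; exact Real.sq_sqrt hargnn
      calc ρ₂ ^ 2 ≤ ρstar ^ 2 := pow_le_pow_left₀ hρ₂0.le hle 2
      _ = δ / 8 + Real.sqrt (δ ^ 2 / 64 + σ2 ^ 2 / c) := h1
    have h2 : 0 ≤ (δ / 8 + Real.sqrt (δ ^ 2 / 64 + σ2 ^ 2 / c)) + ρ₂ ^ 2 - δ / 4 := by
      nlinarith [hs1ge, sq_nonneg ρ₂]
    nlinarith [mul_nonneg (sub_nonneg.mpr hρsq) h2, hs1sq]
  -- Lemma: ρ₂² V₂ ≤ σ2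
  have hbs : ρ₂ ^ 2 * V₂ ≤ σ2 := by
    by_contra hgt
    push_neg at hgt
    have hK2 : ρ₂ ^ 4 - δ * ρ₂ ^ 2 / 4
        ≤ σ2 ^ 2 * (1 / V₂ ^ 2 - δ * ρ₂ ^ 2 / (ρ₂ ^ 2 * V₂ + σ2) ^ 2) := by
      have e : σ2 ^ 2 / c = σ2 ^ 2 * (1 / V₂ ^ 2 - δ * ρ₂ ^ 2 / (ρ₂ ^ 2 * V₂ + σ2) ^ 2) := by
        rw [hfoc₂]; ring
      linarith [hK, e.le, e.ge]
    have hP : (ρ₂ ^ 4 - δ * ρ₂ ^ 2 / 4) * (V₂ ^ 2 * (ρ₂ ^ 2 * V₂ + σ2) ^ 2)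
        ≤ σ2 ^ 2 * ((ρ₂ ^ 2 * V₂ + σ2) ^ 2 - δ * ρ₂ ^ 2 * V₂ ^ 2) := by
      have h := mul_le_mul_of_nonneg_right hK2
        (le_of_lt (mul_pos (pow_pos hV₂ 2) (pow_pos hA₂ 2)))
      have e : σ2 ^ 2 * (1 / V₂ ^ 2 - δ * ρ₂ ^ 2 / (ρ₂ ^ 2 * V₂ + σ2) ^ 2)
          * (V₂ ^ 2 * (ρ₂ ^ 2 * V₂ + σ2) ^ 2)
          = σ2 ^ 2 * ((ρ₂ ^ 2 * V₂ + σ2) ^ 2 - δ * ρ₂ ^ 2 * V₂ ^ 2) := by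
        field_simp
      linarith [h, e.le, e.ge]
    have h4 := mul_le_mul_of_nonneg_left hP (by positivity : (0:ℝ) ≤ 4 * ρ₂ ^ 2)
    -- hIII : 4 r² A³ ≤ δ b² (b + 3s)
    have hIII : 4 * ρ₂ ^ 2 * (ρ₂ ^ 2 * V₂ + σ2) ^ 3
        ≤ δ * (ρ₂ ^ 2 * V₂) ^ 2 * (ρ₂ ^ 2 * V₂ + 3 * σ2) := by
      nlinarith [h4, hgt, mul_pos hρ₂0 hρ₂0, hA₂]
    nlinarith [hIII, hII, hA₂, mul_pos (sub_pos.mpr hII) hA₂,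
      mul_pos (mul_pos hδ0 (pow_pos (mul_pos (pow_pos hρ₂0 2) hV₂) 2))
        (by nlinarith [mul_pos (pow_pos hρ₂0 2) hV₂, hσ] : (0:ℝ) < 3 * (ρ₂ ^ 2 * V₂) + σ2)]
  -- Main argument by contradiction
  by_contra hlt
  push_neg at hlt
  have hab : ρ₁ * ρ₂ * V₁ < σ2 := by
    nlinarith [mul_pos (mul_pos (sub_pos.mpr h12) hρ₂0) hV₁,
      mul_le_mul_of_nonneg_left hlt (sq_nonneg ρ₂), hbs]
  have hkey : ρ₁ * (ρ₂ ^ 2 * V₁ + σ2) < ρ₂ * (ρ₁ ^ 2 * V₁ + σ2) := by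
    nlinarith [mul_pos (sub_pos.mpr h12) (sub_pos.mpr hab)]
  have hstepA : δ * ρ₁ ^ 2 / (ρ₁ ^ 2 * V₁ + σ2) ^ 2 < δ * ρ₂ ^ 2 / (ρ₂ ^ 2 * V₁ + σ2) ^ 2 := by
    rw [div_lt_div_iff₀ (by positivity) (by positivity)]
    have h1 : 0 < ρ₁ * (ρ₂ ^ 2 * V₁ + σ2) := by positivity
    have hsq : (ρ₁ * (ρ₂ ^ 2 * V₁ + σ2)) ^ 2 < (ρ₂ * (ρ₁ ^ 2 * V₁ + σ2)) ^ 2 := by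
      nlinarith [hkey, h1]
    linarith [mul_lt_mul_of_pos_left hsq hδ0]
  have hc1 : ρ₂ ^ 2 * ((ρ₂ ^ 2 * V₁ + σ2) + (ρ₂ ^ 2 * V₂ + σ2)) * V₁ ^ 2
      ≤ (V₁ + V₂) * (ρ₂ ^ 2 * V₁ + σ2) ^ 2 := by
    nlinarith [mul_pos hV₁ (mul_pos hσ hσ), mul_pos hV₂ (mul_pos hσ hσ),
      mul_pos (mul_pos (pow_pos hρ₂0 2) (mul_pos hV₁ hV₂)) hσ]
  have hcore : δ * ρ₂ ^ 4 * ((ρ₂ ^ 2 * V₁ + σ2) + (ρ₂ ^ 2 * V₂ + σ2)) * (V₁ ^ 2 * V₂ ^ 2)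
      ≤ (V₁ + V₂) * (ρ₂ ^ 2 * V₁ + σ2) ^ 2 * (ρ₂ ^ 2 * V₂ + σ2) ^ 2 := by
    have hnn : (0:ℝ) ≤ ((ρ₂ ^ 2 * V₁ + σ2) + (ρ₂ ^ 2 * V₂ + σ2)) * V₁ ^ 2 := by positivity
    have h1 := mul_le_mul_of_nonneg_right hII.le hnn
    have h2 := mul_le_mul_of_nonneg_left hc1 (sq_nonneg (ρ₂ ^ 2 * V₂ + σ2))
    nlinarith [h1, h2]
  have hstepB : 1 / V₂ ^ 2 - δ * ρ₂ ^ 2 / (ρ₂ ^ 2 * V₂ + σ2) ^ 2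
      ≤ 1 / V₁ ^ 2 - δ * ρ₂ ^ 2 / (ρ₂ ^ 2 * V₁ + σ2) ^ 2 := by
    have hV₁' : V₁ ≠ 0 := ne_of_gt hV₁
    have hV₂' : V₂ ≠ 0 := ne_of_gt hV₂
    have hA₁' : ρ₂ ^ 2 * V₁ + σ2 ≠ 0 := ne_of_gt hA₁
    have hA₂' : ρ₂ ^ 2 * V₂ + σ2 ≠ 0 := ne_of_gt hA₂
    have e1 : 1 / V₂ ^ 2 - 1 / V₁ ^ 2 = (V₁ ^ 2 - V₂ ^ 2) / (V₁ ^ 2 * V₂ ^ 2) := by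
      field_simp
    have e2 : δ * ρ₂ ^ 2 / (ρ₂ ^ 2 * V₂ + σ2) ^ 2 - δ * ρ₂ ^ 2 / (ρ₂ ^ 2 * V₁ + σ2) ^ 2
        = δ * ρ₂ ^ 2 * ((ρ₂ ^ 2 * V₁ + σ2) ^ 2 - (ρ₂ ^ 2 * V₂ + σ2) ^ 2)
          / ((ρ₂ ^ 2 * V₁ + σ2) ^ 2 * (ρ₂ ^ 2 * V₂ + σ2) ^ 2) := by
      field_simp
    have hdiv : (V₁ ^ 2 - V₂ ^ 2) / (V₁ ^ 2 * V₂ ^ 2)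
        ≤ δ * ρ₂ ^ 2 * ((ρ₂ ^ 2 * V₁ + σ2) ^ 2 - (ρ₂ ^ 2 * V₂ + σ2) ^ 2)
          / ((ρ₂ ^ 2 * V₁ + σ2) ^ 2 * (ρ₂ ^ 2 * V₂ + σ2) ^ 2) := by
      rw [div_le_div_iff₀ (by positivity) (by positivity)]
      nlinarith [mul_nonneg (sub_nonneg.mpr hlt) (sub_nonneg.mpr hcore)]
    linarith [e1.le, e1.ge, e2.le, e2.ge, hdiv]
  linarith [hfoc₁, hfoc₂, hstepA, hstepB]
end

section
/- Let σ² > 0, c > 0, δ ∈ (0,1), and define ρ* = sqrt(δ/8 + sqrt(δ²/64 + σ⁴/c)). Suppose ρ* < 1, let ρ* ≤ ρ₁ < ρ₂ < 1, and for i = 1,2 let V_i > 0 satisfy 1/(V_i)² − δρ_i²/(ρ_i²V_i + σ²)² = 1/c. Then V₁ < V₂; that is, the steady-state posterior variance is strictly increasing in the autocorrelation on (ρ*, 1). -/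
set_option maxHeartbeats 2000000 in
/-- If ρ* < 1, the steady-state posterior variance is strictly
increasing in the autocorrelation ρ on [ρ*, 1). -/
theorem stmt_9 (σ2 c δ : ℝ) (hσ : 0 < σ2) (hc : 0 < c) (hδ0 : 0 < δ) (hδ1 : δ < 1)
    (ρstar : ℝ)
    (hρstar : ρstar = Real.sqrt (δ / 8 + Real.sqrt (δ ^ 2 / 64 + σ2 ^ 2 / c)))
    (hρstar1 : ρstar < 1)
    (ρ₁ ρ₂ : ℝ) (hρ₁ : ρstar ≤ ρ₁) (h12 : ρ₁ < ρ₂) (hρ₂ : ρ₂ < 1)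
    (V₁ V₂ : ℝ) (hV₁ : 0 < V₁) (hV₂ : 0 < V₂)
    (hfoc₁ : 1 / V₁ ^ 2 - δ * ρ₁ ^ 2 / (ρ₁ ^ 2 * V₁ + σ2) ^ 2 = 1 / c)
    (hfoc₂ : 1 / V₂ ^ 2 - δ * ρ₂ ^ 2 / (ρ₂ ^ 2 * V₂ + σ2) ^ 2 = 1 / c) :
    V₁ < V₂ := by
  by_contra hcon
  push_neg at hcon  -- hcon : V₂ ≤ V₁
  -- basic facts about ρstar
  set S := Real.sqrt (δ ^ 2 / 64 + σ2 ^ 2 / c) with hSdef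
  have hSnn : 0 ≤ S := Real.sqrt_nonneg _
  have hS2 : S ^ 2 = δ ^ 2 / 64 + σ2 ^ 2 / c := Real.sq_sqrt (by positivity)
  have hSge : δ / 8 ≤ S := by nlinarith [hS2, hSnn, sq_nonneg (S - δ/8), div_pos (pow_pos hσ 2) hc]
  have hρstar_pos : 0 < ρstar := by
    rw [hρstar]; exact Real.sqrt_pos.2 (by positivity)
  have hR2 : ρstar ^ 2 = δ / 8 + S := by
    rw [hρstar]; exact Real.sq_sqrt (by positivity)
  have hS2' : c * S ^ 2 = c * (δ ^ 2 / 64) + σ2 ^ 2 := by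
    rw [hS2]; field_simp
  have hkey : c * ρstar ^ 4 - c * δ / 4 * ρstar ^ 2 = σ2 ^ 2 := by
    have h4 : ρstar ^ 4 = (δ / 8 + S) ^ 2 := by
      have : ρstar ^ 4 = (ρstar ^ 2) ^ 2 := by ring
      rw [this, hR2]
    rw [h4, hR2]; linear_combination hS2'
  have hRδ4 : δ / 4 ≤ ρstar ^ 2 := by rw [hR2]; linarith
  have hρ₁pos : 0 < ρ₁ := lt_of_lt_of_le hρstar_pos hρ₁
  have hρ₂pos : 0 < ρ₂ := lt_trans hρ₁pos h12
  have hx1 : ρstar ^ 2 ≤ ρ₁ ^ 2 := by nlinarith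
  have hx12 : ρ₁ ^ 2 < ρ₂ ^ 2 := by nlinarith
  have hx1δ : δ / 4 ≤ ρ₁ ^ 2 := le_trans hRδ4 hx1
  have hx1c : σ2 ^ 2 ≤ c * ρ₁ ^ 4 - c * δ / 4 * ρ₁ ^ 2 := by
    have hint0 : 0 ≤ c * ((ρ₁ ^ 2 - ρstar ^ 2) * (ρ₁ ^ 2 + ρstar ^ 2 - δ / 4)) :=
      mul_nonneg hc.le (mul_nonneg (by linarith) (by linarith))
    linarith [hint0, hkey]
  have hb₁pos : 0 < ρ₁ ^ 2 * V₁ + σ2 := by positivity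
  have hapos : 0 < ρ₂ ^ 2 * V₁ + σ2 := by positivity
  have hbpos : 0 < ρ₂ ^ 2 * V₂ + σ2 := by positivity
  -- polynomial form of the first FOC
  have E₁ : c * (ρ₁ ^ 2 * V₁ + σ2) ^ 2 - c * δ * ρ₁ ^ 2 * V₁ ^ 2
      = V₁ ^ 2 * (ρ₁ ^ 2 * V₁ + σ2) ^ 2 := by
    have h2 : (1 / V₁ ^ 2 - δ * ρ₁ ^ 2 / (ρ₁ ^ 2 * V₁ + σ2) ^ 2)
        * (c * V₁ ^ 2 * (ρ₁ ^ 2 * V₁ + σ2) ^ 2)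
        = (1 / c) * (c * V₁ ^ 2 * (ρ₁ ^ 2 * V₁ + σ2) ^ 2) := by rw [hfoc₁]
    field_simp at h2
    have hM : c * V₁ ^ 2 * (ρ₁ ^ 2 * V₁ + σ2) ^ 2 ≠ 0 := by positivity
    have h3 : (c * (ρ₁ ^ 2 * V₁ + σ2) ^ 2 - c * δ * ρ₁ ^ 2 * V₁ ^ 2)
          * (c * V₁ ^ 2 * (ρ₁ ^ 2 * V₁ + σ2) ^ 2)
        = (V₁ ^ 2 * (ρ₁ ^ 2 * V₁ + σ2) ^ 2) * (c * V₁ ^ 2 * (ρ₁ ^ 2 * V₁ + σ2) ^ 2) := by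
      linear_combination (c * V₁ ^ 2 * (ρ₁ ^ 2 * V₁ + σ2) ^ 2) * h2
    exact mul_right_cancel₀ hM h3
  -- Step A : σ2 ≤ ρ₁² V₁
  have hA : σ2 ≤ ρ₁ ^ 2 * V₁ := by
    by_contra hA'
    push_neg at hA'
    have hδ4x : δ ≤ 4 * ρ₁ ^ 2 := by linarith
    have t1 : δ * ρ₁ ^ 2 * V₁ ^ 2 ≤ 4 * (ρ₁ ^ 2 * V₁) ^ 2 := by
      linarith [mul_nonneg (mul_nonneg (sub_nonneg.2 hδ4x) (sq_nonneg ρ₁)) (sq_nonneg V₁)]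
    have t2 : 0 < σ2 - ρ₁ ^ 2 * V₁ := by linarith
    have P1 : (4 * ρ₁ ^ 4 - δ * ρ₁ ^ 2) * (V₁ ^ 2 * (ρ₁ ^ 2 * V₁ + σ2) ^ 2)
        < 4 * σ2 ^ 2 * (ρ₁ ^ 2 * V₁ + σ2) ^ 2 - 4 * δ * ρ₁ ^ 2 * V₁ ^ 2 * σ2 ^ 2 := by
      linarith [mul_nonneg (mul_nonneg t2.le
          (show (0:ℝ) ≤ ρ₁ ^ 2 * V₁ + 3 * σ2 by positivity))
          (sub_nonneg.2 t1),
        mul_pos t2 (show (0:ℝ) < 3 * (ρ₁ ^ 2 * V₁) * σ2 ^ 2 + σ2 ^ 3 by positivity)]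
    have F1 := mul_lt_mul_of_pos_left P1 hc
    have hx1c' : 4 * σ2 ^ 2 ≤ c * (4 * ρ₁ ^ 4 - δ * ρ₁ ^ 2) := by
      have : c * (4 * ρ₁ ^ 4 - δ * ρ₁ ^ 2) = 4 * (c * ρ₁ ^ 4 - c * δ / 4 * ρ₁ ^ 2) := by ring
      linarith [hx1c]
    have F2 := mul_le_mul_of_nonneg_right hx1c'
      (show (0:ℝ) ≤ V₁ ^ 2 * (ρ₁ ^ 2 * V₁ + σ2) ^ 2 by positivity)
    have F3 : 4 * σ2 ^ 2 * (c * (ρ₁ ^ 2 * V₁ + σ2) ^ 2 - c * δ * ρ₁ ^ 2 * V₁ ^ 2)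
        = 4 * σ2 ^ 2 * (V₁ ^ 2 * (ρ₁ ^ 2 * V₁ + σ2) ^ 2) := by rw [E₁]
    linarith [F1, F2, F3]
  -- Step (1): ρ₂²/(ρ₂²V₁+σ2)² < ρ₁²/(ρ₁²V₁+σ2)²
  have h2' : σ2 < ρ₂ ^ 2 * V₁ := by
    linarith [mul_pos (sub_pos.2 hx12) hV₁]
  have hgt : σ2 ^ 2 < ρ₁ ^ 2 * ρ₂ ^ 2 * V₁ ^ 2 := by
    linarith [mul_le_mul_of_nonneg_left hA hσ.le,
      mul_lt_mul_of_pos_right h2' (mul_pos (pow_pos hρ₁pos 2) hV₁)]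
  have Q1 : ρ₂ ^ 2 * (ρ₁ ^ 2 * V₁ + σ2) ^ 2 < ρ₁ ^ 2 * (ρ₂ ^ 2 * V₁ + σ2) ^ 2 := by
    linarith [mul_pos (sub_pos.2 hx12) (sub_pos.2 hgt)]
  -- ψ_{ρ₂}(V₂) < ψ_{ρ₂}(V₁)
  have hfin : 1 / V₂ ^ 2 - δ * ρ₂ ^ 2 / (ρ₂ ^ 2 * V₂ + σ2) ^ 2
      < 1 / V₁ ^ 2 - δ * ρ₂ ^ 2 / (ρ₂ ^ 2 * V₁ + σ2) ^ 2 := by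
    rw [hfoc₂, ← hfoc₁]
    have hlt : δ * ρ₂ ^ 2 / (ρ₂ ^ 2 * V₁ + σ2) ^ 2
        < δ * ρ₁ ^ 2 / (ρ₁ ^ 2 * V₁ + σ2) ^ 2 := by
      rw [div_lt_div_iff₀ (by positivity) (by positivity)]
      linarith [mul_lt_mul_of_pos_left Q1 hδ0]
    linarith
  -- (B): from FOC₂ positivity
  have hB : δ * ρ₂ ^ 2 * V₂ ^ 2 < (ρ₂ ^ 2 * V₂ + σ2) ^ 2 := by
    have h1 : δ * ρ₂ ^ 2 / (ρ₂ ^ 2 * V₂ + σ2) ^ 2 < 1 / V₂ ^ 2 := by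
      have hcpos : 0 < 1 / c := by positivity
      linarith [hfoc₂]
    rw [div_lt_div_iff₀ (by positivity) (by positivity)] at h1
    linarith
  -- bracket inequality
  have h1br : ρ₂ ^ 2 * V₁ ^ 2 * ((ρ₂ ^ 2 * V₁ + σ2) + (ρ₂ ^ 2 * V₂ + σ2))
      ≤ (V₁ + V₂) * (ρ₂ ^ 2 * V₁ + σ2) ^ 2 := by
    linarith [mul_pos hV₁ (mul_pos hσ hσ), mul_pos hV₂ (mul_pos hσ hσ),
      mul_pos (mul_pos (pow_pos hρ₂pos 2) (mul_pos hV₁ hV₂)) hσ]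
  have hbr : δ * ρ₂ ^ 2 * ρ₂ ^ 2 * V₁ ^ 2 * V₂ ^ 2 * ((ρ₂ ^ 2 * V₁ + σ2) + (ρ₂ ^ 2 * V₂ + σ2))
      < (V₁ + V₂) * (ρ₂ ^ 2 * V₁ + σ2) ^ 2 * (ρ₂ ^ 2 * V₂ + σ2) ^ 2 := by
    have k1 := mul_le_mul_of_nonneg_left h1br
      (show (0:ℝ) ≤ δ * ρ₂ ^ 2 * V₂ ^ 2 by positivity)
    have k2 := mul_lt_mul_of_pos_right hB
      (show (0:ℝ) < (V₁ + V₂) * (ρ₂ ^ 2 * V₁ + σ2) ^ 2 by positivity)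
    linarith [k1, k2]
  -- turn hfin into polynomial form
  have e1 : 1 / V₂ ^ 2 - 1 / V₁ ^ 2
      = ((V₁ - V₂) * (V₁ + V₂)) / (V₁ ^ 2 * V₂ ^ 2) := by
    field_simp; ring
  have e2 : δ * ρ₂ ^ 2 / (ρ₂ ^ 2 * V₂ + σ2) ^ 2 - δ * ρ₂ ^ 2 / (ρ₂ ^ 2 * V₁ + σ2) ^ 2
      = (δ * ρ₂ ^ 2 * (ρ₂ ^ 2 * (V₁ - V₂)) * ((ρ₂ ^ 2 * V₁ + σ2) + (ρ₂ ^ 2 * V₂ + σ2)))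
        / ((ρ₂ ^ 2 * V₂ + σ2) ^ 2 * (ρ₂ ^ 2 * V₁ + σ2) ^ 2) := by
    field_simp; ring
  have hfin2 : ((V₁ - V₂) * (V₁ + V₂)) / (V₁ ^ 2 * V₂ ^ 2)
      < (δ * ρ₂ ^ 2 * (ρ₂ ^ 2 * (V₁ - V₂)) * ((ρ₂ ^ 2 * V₁ + σ2) + (ρ₂ ^ 2 * V₂ + σ2)))
        / ((ρ₂ ^ 2 * V₂ + σ2) ^ 2 * (ρ₂ ^ 2 * V₁ + σ2) ^ 2) := by
    rw [← e1, ← e2]; linarith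
  rw [div_lt_div_iff₀ (by positivity) (by positivity)] at hfin2
  have hint : 0 ≤ (V₁ - V₂) * ((V₁ + V₂) * (ρ₂ ^ 2 * V₁ + σ2) ^ 2 * (ρ₂ ^ 2 * V₂ + σ2) ^ 2
      - δ * ρ₂ ^ 2 * ρ₂ ^ 2 * V₁ ^ 2 * V₂ ^ 2 * ((ρ₂ ^ 2 * V₁ + σ2) + (ρ₂ ^ 2 * V₂ + σ2))) :=
    mul_nonneg (by linarith) (by linarith)
  linarith [hfin2, hint]
end

section
/- Let σ² > 0, c > 0, δ ∈ (0,1), ρ ∈ (0,1), and define ρ* = sqrt(δ/8 + sqrt(δ²/64 + σ⁴/c)). Let V* > 0 satisfy 1/(V*)² − δρ²/(ρ²V* + σ²)² = 1/c. Then ρ²V* < σ² if and only if ρ < ρ*. -/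
set_option maxHeartbeats 1000000


/-- ρ²V* < σ² if and only if ρ < ρ*, where
ρ* = √(δ/8 + √(δ²/64 + σ⁴/c)). -/
theorem stmt_10 (σ2 c δ ρ : ℝ) (hσ : 0 < σ2) (hc : 0 < c) (hδ0 : 0 < δ) (hδ1 : δ < 1)
    (hρ0 : 0 < ρ) (hρ1 : ρ < 1)
    (ρstar : ℝ)
    (hρstar : ρstar = Real.sqrt (δ / 8 + Real.sqrt (δ ^ 2 / 64 + σ2 ^ 2 / c)))
    (V : ℝ) (hV : 0 < V)
    (hfoc : 1 / V ^ 2 - δ * ρ ^ 2 / (ρ ^ 2 * V + σ2) ^ 2 = 1 / c) :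
    ρ ^ 2 * V < σ2 ↔ ρ < ρstar := by
  have hV2 : (0:ℝ) < V ^ 2 := by positivity
  have hden : (0:ℝ) < ρ ^ 2 * V + σ2 := by positivity
  have hden2 : (0:ℝ) < (ρ ^ 2 * V + σ2) ^ 2 := by positivity
  have hE : (ρ ^ 2 * V + σ2) ^ 2 * (c - V ^ 2) = c * δ * ρ ^ 2 * V ^ 2 := by
    have h1 : V ^ 2 ≠ 0 := ne_of_gt hV2
    have h2 : (ρ ^ 2 * V + σ2) ^ 2 ≠ 0 := ne_of_gt hden2
    have h3 : c ≠ 0 := ne_of_gt hc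
    field_simp at hfoc
    linarith [hfoc]
  have hVc : V ^ 2 < c := by
    nlinarith [mul_pos (mul_pos (mul_pos hc hδ0) (pow_pos hρ0 2)) hV2, hden2]
  -- D = (u+w)^2 - δρ²V² > 0, since c*D = V²(u+w)²
  have hD : 0 < (ρ ^ 2 * V + σ2) ^ 2 - δ * ρ ^ 2 * V ^ 2 := by
    nlinarith [mul_pos hV2 hden2]
  -- K4 = 4(u+w)^3 - δρ²V²(u+3w) > 0, via c*K4 = (u+w)²(c(3u+w)+V²(u+3w))
  have hK : 0 < 4 * (ρ ^ 2 * V + σ2) ^ 3 - δ * ρ ^ 2 * V ^ 2 * (ρ ^ 2 * V + 3 * σ2) := by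
    have key : c * (4 * (ρ ^ 2 * V + σ2) ^ 3 - δ * ρ ^ 2 * V ^ 2 * (ρ ^ 2 * V + 3 * σ2))
        = (ρ ^ 2 * V + σ2) ^ 2 * (c * (3 * (ρ ^ 2 * V) + σ2) + V ^ 2 * (ρ ^ 2 * V + 3 * σ2)) := by
      linear_combination (ρ ^ 2 * V + 3 * σ2) * hE
    have h1 : 0 < (ρ ^ 2 * V + σ2) ^ 2 * (c * (3 * (ρ ^ 2 * V) + σ2) + V ^ 2 * (ρ ^ 2 * V + 3 * σ2)) := by
      positivity
    nlinarith [key, h1]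
  -- key identity
  have hI : (4 * c * ρ ^ 4 - c * δ * ρ ^ 2 - 4 * σ2 ^ 2) * ((ρ ^ 2 * V + σ2) ^ 2 - δ * ρ ^ 2 * V ^ 2)
      = (ρ ^ 2 * V - σ2) * (4 * (ρ ^ 2 * V + σ2) ^ 3 - δ * ρ ^ 2 * V ^ 2 * (ρ ^ 2 * V + 3 * σ2)) := by
    linear_combination (4 * ρ ^ 4 - δ * ρ ^ 2) * hE
  have hB : ρ ^ 2 * V < σ2 ↔ 4 * c * ρ ^ 4 - c * δ * ρ ^ 2 < 4 * σ2 ^ 2 := by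
    constructor
    · intro h
      have h1 : (ρ ^ 2 * V - σ2) * (4 * (ρ ^ 2 * V + σ2) ^ 3 - δ * ρ ^ 2 * V ^ 2 * (ρ ^ 2 * V + 3 * σ2)) < 0 :=
        mul_neg_of_neg_of_pos (by linarith) hK
      nlinarith [hI, h1, hD]
    · intro h
      by_contra hcon
      push_neg at hcon
      have h1 : 0 ≤ (ρ ^ 2 * V - σ2) * (4 * (ρ ^ 2 * V + σ2) ^ 3 - δ * ρ ^ 2 * V ^ 2 * (ρ ^ 2 * V + 3 * σ2)) :=
        mul_nonneg (by linarith) (le_of_lt hK)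
      nlinarith [hI, h1, hD]
  -- now relate to ρstar
  set s := Real.sqrt (δ ^ 2 / 64 + σ2 ^ 2 / c) with hs
  clear_value s
  have hs0 : 0 ≤ s := hs ▸ Real.sqrt_nonneg _
  have hs2 : s ^ 2 = δ ^ 2 / 64 + σ2 ^ 2 / c := by
    rw [hs]; exact Real.sq_sqrt (by positivity)
  have hwc : 0 < σ2 ^ 2 / c := by positivity
  have hsδ : δ / 8 < s := by
    rw [hs]
    rw [show δ ^ 2 / 64 + σ2 ^ 2 / c = (δ / 8) ^ 2 + σ2 ^ 2 / c by ring]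
    exact (Real.lt_sqrt (by positivity)).2 (by linarith)
  have hρs2 : ρstar ^ 2 = δ / 8 + s := by
    rw [hρstar]; exact Real.sq_sqrt (by linarith)
  have hρspos : 0 < ρstar := by
    rw [hρstar]; exact Real.sqrt_pos.2 (by linarith)
  have hiff2 : ρ < ρstar ↔ ρ ^ 2 < ρstar ^ 2 :=
    (pow_lt_pow_iff_left₀ hρ0.le hρspos.le two_ne_zero).symm
  have hq : 0 < ρ ^ 2 + s - δ / 8 := by linarith [pow_pos hρ0 2]
  have hs2c : c * s ^ 2 = c * (δ ^ 2 / 64) + σ2 ^ 2 := by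
    rw [hs2, mul_add, mul_div_cancel₀ _ hc.ne']
  have hfac : 4 * c * ρ ^ 4 - c * δ * ρ ^ 2 - 4 * σ2 ^ 2
      = 4 * c * ((ρ ^ 2 - (δ / 8 + s)) * (ρ ^ 2 + s - δ / 8)) := by
    linear_combination 4 * hs2c
  rw [hB, hiff2, hρs2]
  constructor
  · intro h
    by_contra hcon
    push_neg at hcon
    have h1 : 0 ≤ (ρ ^ 2 - (δ / 8 + s)) * (ρ ^ 2 + s - δ / 8) :=
      mul_nonneg (by linarith) hq.le
    have h2 := mul_nonneg (by linarith : (0:ℝ) ≤ 4 * c) h1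
    linarith [hfac]
  · intro h
    have h1 : (ρ ^ 2 - (δ / 8 + s)) * (ρ ^ 2 + s - δ / 8) < 0 :=
      mul_neg_of_neg_of_pos (by linarith) hq
    have h2 := mul_neg_of_pos_of_neg (by linarith : (0:ℝ) < 4 * c) h1
    linarith [hfac]
end

section
/- Let ρ ∈ (0,1), σ² > 0, c > 0, and let 0 ≤ δ₁ < δ₂ < 1, with c < σ⁴/((1 − δ_i ρ²)(1 − ρ²)²) for i = 1,2. For i = 1,2 let V_i > 0 satisfy 1/(V_i)² − δ_i ρ²/(ρ²V_i + σ²)² = 1/c. Then V₁ > V₂; that is, the steady-state posterior variance is strictly decreasing in the discount factor. -/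
/-- Under assumption (8), the steady-state posterior variance is
strictly decreasing in the discount factor δ. -/
theorem stmt_11 (ρ σ2 c : ℝ) (hρ0 : 0 < ρ) (hρ1 : ρ < 1) (hσ : 0 < σ2) (hc : 0 < c)
    (δ₁ δ₂ : ℝ) (hδ₁ : 0 ≤ δ₁) (h12 : δ₁ < δ₂) (hδ₂ : δ₂ < 1)
    (hcost₁ : c < σ2 ^ 2 / ((1 - δ₁ * ρ ^ 2) * (1 - ρ ^ 2) ^ 2))
    (hcost₂ : c < σ2 ^ 2 / ((1 - δ₂ * ρ ^ 2) * (1 - ρ ^ 2) ^ 2))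
    (V₁ V₂ : ℝ) (hV₁ : 0 < V₁) (hV₂ : 0 < V₂)
    (hfoc₁ : 1 / V₁ ^ 2 - δ₁ * ρ ^ 2 / (ρ ^ 2 * V₁ + σ2) ^ 2 = 1 / c)
    (hfoc₂ : 1 / V₂ ^ 2 - δ₂ * ρ ^ 2 / (ρ ^ 2 * V₂ + σ2) ^ 2 = 1 / c) :
    V₂ < V₁ := by
  have hD₁ : 0 < ρ ^ 2 * V₁ + σ2 := by positivity
  have hD₂ : 0 < ρ ^ 2 * V₂ + σ2 := by positivity
  have hδ₂0 : 0 < δ₂ := lt_of_le_of_lt hδ₁ h12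
  have e₁ : c * ((ρ ^ 2 * V₁ + σ2) ^ 2 - δ₁ * ρ ^ 2 * V₁ ^ 2)
      = V₁ ^ 2 * (ρ ^ 2 * V₁ + σ2) ^ 2 := by
    field_simp at hfoc₁
    linear_combination hfoc₁
  have e₂ : c * ((ρ ^ 2 * V₂ + σ2) ^ 2 - δ₂ * ρ ^ 2 * V₂ ^ 2)
      = V₂ ^ 2 * (ρ ^ 2 * V₂ + σ2) ^ 2 := by
    field_simp at hfoc₂
    linear_combination hfoc₂
  have h2 : δ₂ * ρ ^ 2 * V₂ ^ 2 < (ρ ^ 2 * V₂ + σ2) ^ 2 := by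
    nlinarith [mul_pos (mul_pos hV₂ hV₂) (mul_pos hD₂ hD₂), e₂]
  have heq : ((ρ ^ 2 * V₁ + σ2) ^ 2 - δ₁ * ρ ^ 2 * V₁ ^ 2) * (V₂ ^ 2 * (ρ ^ 2 * V₂ + σ2) ^ 2)
      = ((ρ ^ 2 * V₂ + σ2) ^ 2 - δ₂ * ρ ^ 2 * V₂ ^ 2) * (V₁ ^ 2 * (ρ ^ 2 * V₁ + σ2) ^ 2) := by
    have h' : c * (((ρ ^ 2 * V₁ + σ2) ^ 2 - δ₁ * ρ ^ 2 * V₁ ^ 2) * (V₂ ^ 2 * (ρ ^ 2 * V₂ + σ2) ^ 2))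
        = c * (((ρ ^ 2 * V₂ + σ2) ^ 2 - δ₂ * ρ ^ 2 * V₂ ^ 2) * (V₁ ^ 2 * (ρ ^ 2 * V₁ + σ2) ^ 2)) := by
      linear_combination (V₂ ^ 2 * (ρ ^ 2 * V₂ + σ2) ^ 2) * e₁
        - (V₁ ^ 2 * (ρ ^ 2 * V₁ + σ2) ^ 2) * e₂
    exact mul_left_cancel₀ (ne_of_gt hc) h'
  by_contra hcon
  push_neg at hcon
  -- hcon : V₁ ≤ V₂
  have hsub : 0 ≤ V₂ - V₁ := sub_nonneg.2 hcon
  have hB : ρ ^ 2 * V₁ ^ 2 * (ρ ^ 2 * V₂ + σ2) ≤ V₂ * (ρ ^ 2 * V₁ + σ2) ^ 2 := by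
    nlinarith [mul_pos hV₂ (mul_pos hσ hσ),
      mul_nonneg (mul_nonneg (mul_nonneg (sq_nonneg ρ) hV₁.le) hσ.le)
        (by linarith : (0:ℝ) ≤ 2 * V₂ - V₁)]
  have hρV₁ : ρ ^ 2 * V₁ ≤ ρ ^ 2 * V₁ + σ2 := by linarith
  have hT2 : δ₂ * ρ ^ 4 * V₁ ^ 2 * V₂ ^ 2 * (ρ ^ 2 * V₂ + σ2)
      ≤ V₂ * (ρ ^ 2 * V₁ + σ2) ^ 2 * (ρ ^ 2 * V₂ + σ2) ^ 2 := by
    calc δ₂ * ρ ^ 4 * V₁ ^ 2 * V₂ ^ 2 * (ρ ^ 2 * V₂ + σ2)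
        = (δ₂ * ρ ^ 2 * V₂ ^ 2) * (ρ ^ 2 * V₁ ^ 2 * (ρ ^ 2 * V₂ + σ2)) := by ring
      _ ≤ (ρ ^ 2 * V₂ + σ2) ^ 2 * (ρ ^ 2 * V₁ ^ 2 * (ρ ^ 2 * V₂ + σ2)) :=
          mul_le_mul_of_nonneg_right h2.le (by positivity)
      _ ≤ (ρ ^ 2 * V₂ + σ2) ^ 2 * (V₂ * (ρ ^ 2 * V₁ + σ2) ^ 2) :=
          mul_le_mul_of_nonneg_left hB (by positivity)
      _ = V₂ * (ρ ^ 2 * V₁ + σ2) ^ 2 * (ρ ^ 2 * V₂ + σ2) ^ 2 := by ring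
  have hT1 : δ₂ * ρ ^ 4 * V₁ ^ 2 * V₂ ^ 2 * (ρ ^ 2 * V₁ + σ2)
      ≤ V₁ * (ρ ^ 2 * V₁ + σ2) ^ 2 * (ρ ^ 2 * V₂ + σ2) ^ 2 := by
    have hb : ρ ^ 2 * V₁ ^ 2 * (ρ ^ 2 * V₁ + σ2) ≤ V₁ * (ρ ^ 2 * V₁ + σ2) ^ 2 := by
      calc ρ ^ 2 * V₁ ^ 2 * (ρ ^ 2 * V₁ + σ2)
          = (ρ ^ 2 * V₁) * (V₁ * (ρ ^ 2 * V₁ + σ2)) := by ring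
        _ ≤ (ρ ^ 2 * V₁ + σ2) * (V₁ * (ρ ^ 2 * V₁ + σ2)) :=
            mul_le_mul_of_nonneg_right hρV₁ (by positivity)
        _ = V₁ * (ρ ^ 2 * V₁ + σ2) ^ 2 := by ring
    calc δ₂ * ρ ^ 4 * V₁ ^ 2 * V₂ ^ 2 * (ρ ^ 2 * V₁ + σ2)
        = (δ₂ * ρ ^ 2 * V₂ ^ 2) * (ρ ^ 2 * V₁ ^ 2 * (ρ ^ 2 * V₁ + σ2)) := by ring
      _ ≤ (ρ ^ 2 * V₂ + σ2) ^ 2 * (ρ ^ 2 * V₁ ^ 2 * (ρ ^ 2 * V₁ + σ2)) :=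
          mul_le_mul_of_nonneg_right h2.le (by positivity)
      _ ≤ (ρ ^ 2 * V₂ + σ2) ^ 2 * (V₁ * (ρ ^ 2 * V₁ + σ2) ^ 2) :=
          mul_le_mul_of_nonneg_left hb (by positivity)
      _ = V₁ * (ρ ^ 2 * V₁ + σ2) ^ 2 * (ρ ^ 2 * V₂ + σ2) ^ 2 := by ring
  -- key identity from the two FOCs
  have key : (ρ ^ 2 * V₁ + σ2) ^ 2 * (ρ ^ 2 * V₂ + σ2) ^ 2 * (V₂ ^ 2 - V₁ ^ 2)
      + (δ₂ - δ₁) * ρ ^ 2 * V₁ ^ 2 * V₂ ^ 2 * (ρ ^ 2 * V₂ + σ2) ^ 2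
      = (V₂ - V₁) * (δ₂ * ρ ^ 4 * V₁ ^ 2 * V₂ ^ 2 * (ρ ^ 2 * V₁ + σ2))
        + (V₂ - V₁) * (δ₂ * ρ ^ 4 * V₁ ^ 2 * V₂ ^ 2 * (ρ ^ 2 * V₂ + σ2)) := by
    linear_combination heq
  have expand : (ρ ^ 2 * V₁ + σ2) ^ 2 * (ρ ^ 2 * V₂ + σ2) ^ 2 * (V₂ ^ 2 - V₁ ^ 2)
      = (V₂ - V₁) * (V₁ * (ρ ^ 2 * V₁ + σ2) ^ 2 * (ρ ^ 2 * V₂ + σ2) ^ 2)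
        + (V₂ - V₁) * (V₂ * (ρ ^ 2 * V₁ + σ2) ^ 2 * (ρ ^ 2 * V₂ + σ2) ^ 2) := by ring
  have hm1 := mul_le_mul_of_nonneg_left hT1 hsub
  have hm2 := mul_le_mul_of_nonneg_left hT2 hsub
  have hpos : 0 < (δ₂ - δ₁) * ρ ^ 2 * V₁ ^ 2 * V₂ ^ 2 * (ρ ^ 2 * V₂ + σ2) ^ 2 := by
    have : 0 < δ₂ - δ₁ := sub_pos.2 h12
    positivity
  linarith [key, expand, hm1, hm2, hpos]
end

section
/- Let ρ ∈ (0,1), σ² > 0, c > 0, and let 0 ≤ δ₁ < δ₂ < 1, with c < σ⁴/((1 − δ_i ρ²)(1 − ρ²)²) for i = 1,2. For i = 1,2 let V_i > 0 satisfy 1/(V_i)² − δ_i ρ²/(ρ²V_i + σ²)² = 1/c and set x_i = 1/V_i − 1/(ρ²V_i + σ²). Then x₁ < x₂; that is, the steady-state precision is strictly increasing in the discount factor. -/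
set_option maxHeartbeats 800000

/-- Pairwise strict decrease of `F(V) = 1/V² − δρ²/(ρ²V+σ²)²` on the region where `F > 0`. -/
lemma key_mono (ρ σ2 δ a b : ℝ) (hρ : 0 < ρ) (hσ : 0 < σ2) (hδ : 0 ≤ δ)
    (ha : 0 < a) (hb : 0 < b)
    (hFa : δ * ρ ^ 2 * a ^ 2 < (ρ ^ 2 * a + σ2) ^ 2)
    (hFb : δ * ρ ^ 2 * b ^ 2 < (ρ ^ 2 * b + σ2) ^ 2)
    (hgt : 1 / b ^ 2 - δ * ρ ^ 2 / (ρ ^ 2 * b + σ2) ^ 2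
         < 1 / a ^ 2 - δ * ρ ^ 2 / (ρ ^ 2 * a + σ2) ^ 2) : a < b := by
  by_contra hba
  push_neg at hba
  set Aa := ρ ^ 2 * a + σ2 with hAa
  set Ab := ρ ^ 2 * b + σ2 with hAb
  have hAa0 : 0 < Aa := by positivity
  have hAb0 : 0 < Ab := by positivity
  have hρa : ρ ^ 2 * a < Aa := by rw [hAa]; linarith
  have hρb : ρ ^ 2 * b < Ab := by rw [hAb]; linarith
  have h1 : δ * ρ ^ 4 * a * b ^ 2 < Aa * Ab ^ 2 := by
    nlinarith [mul_lt_mul'' hFb hρa (by positivity) (by positivity)]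
  have h2 : δ * ρ ^ 4 * a ^ 2 * b < Aa ^ 2 * Ab := by
    nlinarith [mul_lt_mul'' hFa hρb (by positivity) (by positivity)]
  have hK : 0 < (a + b) * (Aa ^ 2 * Ab ^ 2) - δ * ρ ^ 4 * a ^ 2 * b ^ 2 * (Aa + Ab) := by
    nlinarith [mul_lt_mul_of_pos_left h1 (mul_pos ha hAa0),
      mul_lt_mul_of_pos_left h2 (mul_pos hb hAb0)]
  have hident : (1 / a ^ 2 - δ * ρ ^ 2 / Aa ^ 2) - (1 / b ^ 2 - δ * ρ ^ 2 / Ab ^ 2)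
      = ((b - a) * ((a + b) * (Aa ^ 2 * Ab ^ 2) - δ * ρ ^ 4 * a ^ 2 * b ^ 2 * (Aa + Ab)))
        / (a ^ 2 * b ^ 2 * Aa ^ 2 * Ab ^ 2) := by
    rw [hAa, hAb]
    field_simp
    ring
  have hnum : (b - a) * ((a + b) * (Aa ^ 2 * Ab ^ 2) - δ * ρ ^ 4 * a ^ 2 * b ^ 2 * (Aa + Ab)) ≤ 0 :=
    mul_nonpos_of_nonpos_of_nonneg (by linarith) (le_of_lt hK)
  have hden : 0 < a ^ 2 * b ^ 2 * Aa ^ 2 * Ab ^ 2 := by positivity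
  have := div_nonpos_of_nonpos_of_nonneg hnum (le_of_lt hden)
  rw [← hident] at this
  linarith

/-- Under assumption (8), the steady-state precision is strictly
increasing in the discount factor δ. -/
theorem stmt_12 (ρ σ2 c : ℝ) (hρ0 : 0 < ρ) (hρ1 : ρ < 1) (hσ : 0 < σ2) (hc : 0 < c)
    (δ₁ δ₂ : ℝ) (hδ₁ : 0 ≤ δ₁) (h12 : δ₁ < δ₂) (hδ₂ : δ₂ < 1)
    (hcost₁ : c < σ2 ^ 2 / ((1 - δ₁ * ρ ^ 2) * (1 - ρ ^ 2) ^ 2))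
    (hcost₂ : c < σ2 ^ 2 / ((1 - δ₂ * ρ ^ 2) * (1 - ρ ^ 2) ^ 2))
    (V₁ V₂ : ℝ) (hV₁ : 0 < V₁) (hV₂ : 0 < V₂)
    (hfoc₁ : 1 / V₁ ^ 2 - δ₁ * ρ ^ 2 / (ρ ^ 2 * V₁ + σ2) ^ 2 = 1 / c)
    (hfoc₂ : 1 / V₂ ^ 2 - δ₂ * ρ ^ 2 / (ρ ^ 2 * V₂ + σ2) ^ 2 = 1 / c)
    (x₁ x₂ : ℝ)
    (hx₁ : x₁ = 1 / V₁ - 1 / (ρ ^ 2 * V₁ + σ2))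
    (hx₂ : x₂ = 1 / V₂ - 1 / (ρ ^ 2 * V₂ + σ2)) :
    x₁ < x₂ := by
  have hρ2 : ρ ^ 2 < 1 := by nlinarith
  have hδ₂' : 0 ≤ δ₂ := le_trans hδ₁ (le_of_lt h12)
  have hA₁ : 0 < ρ ^ 2 * V₁ + σ2 := by positivity
  have hA₂ : 0 < ρ ^ 2 * V₂ + σ2 := by positivity
  have hc' : 0 < 1 / c := by positivity
  -- F(Vᵢ, δᵢ) > 0 in cleared-denominator form
  have hF₁ : δ₁ * ρ ^ 2 * V₁ ^ 2 < (ρ ^ 2 * V₁ + σ2) ^ 2 := by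
    have h : δ₁ * ρ ^ 2 / (ρ ^ 2 * V₁ + σ2) ^ 2 < 1 / V₁ ^ 2 := by linarith
    rw [div_lt_div_iff₀ (by positivity) (by positivity)] at h
    nlinarith [h]
  have hF₂ : δ₂ * ρ ^ 2 * V₂ ^ 2 < (ρ ^ 2 * V₂ + σ2) ^ 2 := by
    have h : δ₂ * ρ ^ 2 / (ρ ^ 2 * V₂ + σ2) ^ 2 < 1 / V₂ ^ 2 := by linarith
    rw [div_lt_div_iff₀ (by positivity) (by positivity)] at h
    nlinarith [h]
  -- the threshold W = σ²/(1-ρ²), fixed point of V ↦ ρ²V + σ²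
  have h1ρ : 0 < 1 - ρ ^ 2 := by nlinarith
  set W := σ2 / (1 - ρ ^ 2) with hW
  have hW0 : 0 < W := div_pos hσ h1ρ
  have hne : (1 : ℝ) - ρ ^ 2 ≠ 0 := ne_of_gt h1ρ
  have hAW : ρ ^ 2 * W + σ2 = W := by
    rw [hW]; field_simp; ring
  -- Vᵢ < W, using assumption (8)
  have hbound : ∀ δ V, 0 ≤ δ → δ < 1 → 0 < V →
      c < σ2 ^ 2 / ((1 - δ * ρ ^ 2) * (1 - ρ ^ 2) ^ 2) →
      (1 / V ^ 2 - δ * ρ ^ 2 / (ρ ^ 2 * V + σ2) ^ 2 = 1 / c) →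
      δ * ρ ^ 2 * V ^ 2 < (ρ ^ 2 * V + σ2) ^ 2 → V < W := by
    intro δ V hδ0 hδ1 hV hcost hfoc hF
    have hδρ : 0 < 1 - δ * ρ ^ 2 := by
      have h1 : δ * ρ ^ 2 ≤ 1 * ρ ^ 2 := mul_le_mul_of_nonneg_right hδ1.le (sq_nonneg ρ)
      have h2 := one_mul (ρ ^ 2)
      linarith
    have hD : 0 < (1 - δ * ρ ^ 2) * (1 - ρ ^ 2) ^ 2 := mul_pos hδρ (pow_pos h1ρ 2)
    have hcD : c * ((1 - δ * ρ ^ 2) * (1 - ρ ^ 2) ^ 2) < σ2 ^ 2 := (lt_div_iff₀ hD).mp hcost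
    have hgt : 1 / W ^ 2 - δ * ρ ^ 2 / (ρ ^ 2 * W + σ2) ^ 2
        < 1 / V ^ 2 - δ * ρ ^ 2 / (ρ ^ 2 * V + σ2) ^ 2 := by
      rw [hAW, hfoc]
      have h1 : 1 / W ^ 2 - δ * ρ ^ 2 / W ^ 2 = (1 - δ * ρ ^ 2) * (1 - ρ ^ 2) ^ 2 / σ2 ^ 2 := by
        rw [hW]; field_simp
      rw [h1, div_lt_div_iff₀ (by positivity) hc]
      nlinarith [hcD]
    have hFW : δ * ρ ^ 2 * W ^ 2 < (ρ ^ 2 * W + σ2) ^ 2 := by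
      rw [hAW]; nlinarith [sq_nonneg W, mul_pos hW0 hW0]
    exact key_mono ρ σ2 δ V W hρ0 hσ hδ0 hV hW0 hF hFW hgt
  have hVW₁ : V₁ < W := hbound δ₁ V₁ hδ₁ (lt_trans h12 hδ₂) hV₁ hcost₁ hfoc₁ hF₁
  have hVW₂ : V₂ < W := hbound δ₂ V₂ hδ₂' hδ₂ hV₂ hcost₂ hfoc₂ hF₂
  -- V₂ < V₁ : compare F(·, δ₁) at V₂ and V₁
  have hF₂1 : δ₁ * ρ ^ 2 * V₂ ^ 2 < (ρ ^ 2 * V₂ + σ2) ^ 2 := by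
    have h := mul_le_mul_of_nonneg_right h12.le (mul_nonneg (sq_nonneg ρ) (sq_nonneg V₂))
    nlinarith [h, hF₂]
  have hV21 : V₂ < V₁ := by
    apply key_mono ρ σ2 δ₁ V₂ V₁ hρ0 hσ hδ₁ hV₂ hV₁ hF₂1 hF₁
    rw [hfoc₁]
    have h2 : 1 / V₂ ^ 2 = 1 / c + δ₂ * ρ ^ 2 / (ρ ^ 2 * V₂ + σ2) ^ 2 := by linarith
    rw [h2]
    have : δ₁ * ρ ^ 2 / (ρ ^ 2 * V₂ + σ2) ^ 2 < δ₂ * ρ ^ 2 / (ρ ^ 2 * V₂ + σ2) ^ 2 :=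
      (div_lt_div_iff_of_pos_right (by positivity)).mpr (mul_lt_mul_of_pos_right h12 (pow_pos hρ0 2))
    linarith
  -- finally x₁ < x₂ since x is decreasing in V on (0, W)
  have hWV₁ : (1 - ρ ^ 2) * V₁ < σ2 := by
    rw [hW, lt_div_iff₀ h1ρ] at hVW₁; linarith [hVW₁]
  have hWV₂ : (1 - ρ ^ 2) * V₂ < σ2 := by
    rw [hW, lt_div_iff₀ h1ρ] at hVW₂; linarith [hVW₂]
  have hcross : ρ ^ 2 * V₁ * V₂ < (ρ ^ 2 * V₁ + σ2) * (ρ ^ 2 * V₂ + σ2) := by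
    nlinarith [mul_pos hσ hσ, mul_lt_mul_of_pos_left hWV₁ (mul_pos (mul_pos hρ0 hρ0) hV₂)]
  have hident : x₂ - x₁ = (V₁ - V₂) * ((ρ ^ 2 * V₁ + σ2) * (ρ ^ 2 * V₂ + σ2) - ρ ^ 2 * V₁ * V₂)
      / (V₁ * V₂ * (ρ ^ 2 * V₁ + σ2) * (ρ ^ 2 * V₂ + σ2)) := by
    rw [hx₁, hx₂]
    field_simp
    ring
  have hpos : 0 < (V₁ - V₂) * ((ρ ^ 2 * V₁ + σ2) * (ρ ^ 2 * V₂ + σ2) - ρ ^ 2 * V₁ * V₂)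
      / (V₁ * V₂ * (ρ ^ 2 * V₁ + σ2) * (ρ ^ 2 * V₂ + σ2)) := by
    apply div_pos
    · exact mul_pos (by linarith) (by linarith)
    · positivity
  linarith [hident ▸ hpos]
end

section
/- Let ρ ∈ (0,1), σ² > 0, δ ∈ [0,1), and let 0 < c₁ < c₂ with c_i < σ⁴/((1 − δρ²)(1 − ρ²)²) for i = 1,2. For i = 1,2 let V_i > 0 satisfy 1/(V_i)² − δρ²/(ρ²V_i + σ²)² = 1/c_i. Then V₁ < V₂; that is, the steady-state posterior variance is strictly increasing in the marginal precision cost. -/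
/-- Under assumption (8), the steady-state posterior variance is
strictly increasing in the marginal precision cost c. -/
theorem stmt_13 (ρ σ2 δ : ℝ) (hρ0 : 0 < ρ) (hρ1 : ρ < 1) (hσ : 0 < σ2)
    (hδ0 : 0 ≤ δ) (hδ1 : δ < 1)
    (c₁ c₂ : ℝ) (hc₁ : 0 < c₁) (h12 : c₁ < c₂)
    (hcost₁ : c₁ < σ2 ^ 2 / ((1 - δ * ρ ^ 2) * (1 - ρ ^ 2) ^ 2))
    (hcost₂ : c₂ < σ2 ^ 2 / ((1 - δ * ρ ^ 2) * (1 - ρ ^ 2) ^ 2))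
    (V₁ V₂ : ℝ) (hV₁ : 0 < V₁) (hV₂ : 0 < V₂)
    (hfoc₁ : 1 / V₁ ^ 2 - δ * ρ ^ 2 / (ρ ^ 2 * V₁ + σ2) ^ 2 = 1 / c₁)
    (hfoc₂ : 1 / V₂ ^ 2 - δ * ρ ^ 2 / (ρ ^ 2 * V₂ + σ2) ^ 2 = 1 / c₂) :
    V₁ < V₂ := by
  have hX₁ : 0 < ρ ^ 2 * V₁ + σ2 := by positivity
  have hX₂ : 0 < ρ ^ 2 * V₂ + σ2 := by positivity
  have hc₂ : 0 < c₂ := hc₁.trans h12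
  have hcc : 1 / c₂ < 1 / c₁ := one_div_lt_one_div_of_lt hc₁ h12
  have hg : 1 / V₂ ^ 2 - δ * ρ ^ 2 / (ρ ^ 2 * V₂ + σ2) ^ 2
      < 1 / V₁ ^ 2 - δ * ρ ^ 2 / (ρ ^ 2 * V₁ + σ2) ^ 2 := by
    rw [hfoc₁, hfoc₂]; exact hcc
  have hpos : ∀ V c, 0 < V → 0 < c →
      1 / V ^ 2 - δ * ρ ^ 2 / (ρ ^ 2 * V + σ2) ^ 2 = 1 / c →
      δ * ρ ^ 2 * V ^ 2 ≤ (ρ ^ 2 * V + σ2) ^ 2 := by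
    intro V c hV hc hfoc
    have hX : 0 < ρ ^ 2 * V + σ2 := by positivity
    have h0 : δ * ρ ^ 2 / (ρ ^ 2 * V + σ2) ^ 2 < 1 / V ^ 2 := by
      have : 0 < 1 / c := by positivity
      linarith
    rw [div_lt_div_iff₀ (by positivity) (by positivity)] at h0
    nlinarith
  have s₁ : δ * ρ ^ 2 * V₁ ^ 2 ≤ (ρ ^ 2 * V₁ + σ2) ^ 2 := hpos V₁ c₁ hV₁ hc₁ hfoc₁
  have s₂ : δ * ρ ^ 2 * V₂ ^ 2 ≤ (ρ ^ 2 * V₂ + σ2) ^ 2 := hpos V₂ c₂ hV₂ hc₂ hfoc₂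
  have t₁ : ρ ^ 4 * V₁ ^ 2 ≤ (ρ ^ 2 * V₁ + σ2) ^ 2 := by
    nlinarith [mul_pos (mul_pos (pow_pos hρ0 2) hV₁) hσ, sq_nonneg σ2]
  have t₂ : ρ ^ 4 * V₂ ^ 2 ≤ (ρ ^ 2 * V₂ + σ2) ^ 2 := by
    nlinarith [mul_pos (mul_pos (pow_pos hρ0 2) hV₂) hσ, sq_nonneg σ2]
  by_contra hlt
  push_neg at hlt
  -- hlt : V₂ ≤ V₁
  have m1 : (δ * ρ ^ 2 * V₂ ^ 2) * (δ * ρ ^ 2 * V₁ ^ 2)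
      ≤ (ρ ^ 2 * V₂ + σ2) ^ 2 * (ρ ^ 2 * V₁ + σ2) ^ 2 :=
    mul_le_mul s₂ s₁ (by positivity) (by positivity)
  have m2 : ((δ * ρ ^ 2 * V₂ ^ 2) * (δ * ρ ^ 2 * V₁ ^ 2)) * (ρ ^ 4 * V₁ ^ 2)
      ≤ ((ρ ^ 2 * V₂ + σ2) ^ 2 * (ρ ^ 2 * V₁ + σ2) ^ 2) * (ρ ^ 2 * V₁ + σ2) ^ 2 :=
    mul_le_mul m1 t₁ (by positivity) (by positivity)
  have m3 : ((δ * ρ ^ 2 * V₂ ^ 2) * (δ * ρ ^ 2 * V₁ ^ 2)) * (ρ ^ 4 * V₂ ^ 2)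
      ≤ ((ρ ^ 2 * V₂ + σ2) ^ 2 * (ρ ^ 2 * V₁ + σ2) ^ 2) * (ρ ^ 2 * V₂ + σ2) ^ 2 :=
    mul_le_mul m1 t₂ (by positivity) (by positivity)
  have k1 : δ * ρ ^ 4 * V₂ * V₁ ^ 2 ≤ (ρ ^ 2 * V₂ + σ2) * (ρ ^ 2 * V₁ + σ2) ^ 2 := by
    apply le_of_pow_le_pow_left₀ (n := 2) two_ne_zero (by positivity)
    calc (δ * ρ ^ 4 * V₂ * V₁ ^ 2) ^ 2
        = ((δ * ρ ^ 2 * V₂ ^ 2) * (δ * ρ ^ 2 * V₁ ^ 2)) * (ρ ^ 4 * V₁ ^ 2) := by ring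
      _ ≤ ((ρ ^ 2 * V₂ + σ2) ^ 2 * (ρ ^ 2 * V₁ + σ2) ^ 2) * (ρ ^ 2 * V₁ + σ2) ^ 2 := m2
      _ = ((ρ ^ 2 * V₂ + σ2) * (ρ ^ 2 * V₁ + σ2) ^ 2) ^ 2 := by ring
  have k2 : δ * ρ ^ 4 * V₂ ^ 2 * V₁ ≤ (ρ ^ 2 * V₂ + σ2) ^ 2 * (ρ ^ 2 * V₁ + σ2) := by
    apply le_of_pow_le_pow_left₀ (n := 2) two_ne_zero (by positivity)
    calc (δ * ρ ^ 4 * V₂ ^ 2 * V₁) ^ 2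
        = ((δ * ρ ^ 2 * V₂ ^ 2) * (δ * ρ ^ 2 * V₁ ^ 2)) * (ρ ^ 4 * V₂ ^ 2) := by ring
      _ ≤ ((ρ ^ 2 * V₂ + σ2) ^ 2 * (ρ ^ 2 * V₁ + σ2) ^ 2) * (ρ ^ 2 * V₂ + σ2) ^ 2 := m3
      _ = ((ρ ^ 2 * V₂ + σ2) ^ 2 * (ρ ^ 2 * V₁ + σ2)) ^ 2 := by ring
  have hA : δ * ρ ^ 4 * (ρ ^ 2 * V₂ + σ2) * V₁ ^ 2 * V₂ ^ 2
      ≤ V₂ * (ρ ^ 2 * V₁ + σ2) ^ 2 * (ρ ^ 2 * V₂ + σ2) ^ 2 := by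
    have := mul_le_mul_of_nonneg_right k1
      (le_of_lt (mul_pos hX₂ hV₂))
    linarith [this]
  have hB : δ * ρ ^ 4 * (ρ ^ 2 * V₁ + σ2) * V₁ ^ 2 * V₂ ^ 2
      ≤ V₁ * (ρ ^ 2 * V₁ + σ2) ^ 2 * (ρ ^ 2 * V₂ + σ2) ^ 2 := by
    have := mul_le_mul_of_nonneg_right k2
      (le_of_lt (mul_pos hX₁ hV₁))
    linarith [this]
  have hbr : 0 ≤ (V₁ + V₂) * (ρ ^ 2 * V₁ + σ2) ^ 2 * (ρ ^ 2 * V₂ + σ2) ^ 2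
      - δ * ρ ^ 4 * ((ρ ^ 2 * V₁ + σ2) + (ρ ^ 2 * V₂ + σ2)) * V₁ ^ 2 * V₂ ^ 2 := by
    linarith [hA, hB]
  have hd : 0 ≤ V₁ - V₂ := by linarith
  have key : (V₂ ^ 2 - V₁ ^ 2) * ((ρ ^ 2 * V₁ + σ2) ^ 2 * (ρ ^ 2 * V₂ + σ2) ^ 2)
      ≤ δ * ρ ^ 2 * ((ρ ^ 2 * V₂ + σ2) ^ 2 - (ρ ^ 2 * V₁ + σ2) ^ 2)
        * (V₁ ^ 2 * V₂ ^ 2) := by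
    linarith [mul_nonneg hd hbr]
  have h1 : 1 / V₁ ^ 2 - 1 / V₂ ^ 2 = (V₂ ^ 2 - V₁ ^ 2) / (V₁ ^ 2 * V₂ ^ 2) := by
    field_simp
  have h2 : δ * ρ ^ 2 / (ρ ^ 2 * V₁ + σ2) ^ 2 - δ * ρ ^ 2 / (ρ ^ 2 * V₂ + σ2) ^ 2
      = δ * ρ ^ 2 * ((ρ ^ 2 * V₂ + σ2) ^ 2 - (ρ ^ 2 * V₁ + σ2) ^ 2)
        / ((ρ ^ 2 * V₁ + σ2) ^ 2 * (ρ ^ 2 * V₂ + σ2) ^ 2) := by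
    field_simp
  have h3 : (V₂ ^ 2 - V₁ ^ 2) / (V₁ ^ 2 * V₂ ^ 2)
      ≤ δ * ρ ^ 2 * ((ρ ^ 2 * V₂ + σ2) ^ 2 - (ρ ^ 2 * V₁ + σ2) ^ 2)
        / ((ρ ^ 2 * V₁ + σ2) ^ 2 * (ρ ^ 2 * V₂ + σ2) ^ 2) := by
    rw [div_le_div_iff₀ (by positivity) (by positivity)]
    linarith [key]
  linarith [hg, h1 ▸ h3, h2]
end

section
/- Let ρ ∈ (0,1), σ² > 0, δ ∈ [0,1), and let 0 < c₁ < c₂ with c_i < σ⁴/((1 − δρ²)(1 − ρ²)²) for i = 1,2. For i = 1,2 let V_i > 0 satisfy 1/(V_i)² − δρ²/(ρ²V_i + σ²)² = 1/c_i and set x_i = 1/V_i − 1/(ρ²V_i + σ²). Then x₁ > x₂; that is, the steady-state precision is strictly decreasing in the marginal precision cost. -/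
/-- Under assumption (8), any positive solution of the FOC satisfies
`(1-ρ²) V < σ²`, i.e. `V` lies below the fixed point `σ²/(1-ρ²)`. -/
lemma stmt_14_aux (ρ σ2 δ c V : ℝ) (hρ0 : 0 < ρ) (hρ1 : ρ < 1) (hσ : 0 < σ2)
    (hδ0 : 0 ≤ δ) (hδ1 : δ < 1) (hc : 0 < c)
    (hcost : c < σ2 ^ 2 / ((1 - δ * ρ ^ 2) * (1 - ρ ^ 2) ^ 2))
    (hV : 0 < V)
    (hfoc : 1 / V ^ 2 - δ * ρ ^ 2 / (ρ ^ 2 * V + σ2) ^ 2 = 1 / c) :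
    (1 - ρ ^ 2) * V < σ2 := by
  by_contra h
  push_neg at h
  have hρ2 : ρ ^ 2 < 1 := by nlinarith
  have hK : 0 < 1 - δ * ρ ^ 2 := by nlinarith
  have hKK : 0 < (1 - δ * ρ ^ 2) * (1 - ρ ^ 2) ^ 2 :=
    mul_pos hK (pow_pos (by linarith) 2)
  have hW : 0 < ρ ^ 2 * V + σ2 := by positivity
  have hWV : ρ ^ 2 * V + σ2 ≤ V := by nlinarith
  -- From hcost : K/σ⁴ < 1/c
  have hcost' : (1 - δ * ρ ^ 2) * (1 - ρ ^ 2) ^ 2 / σ2 ^ 2 < 1 / c := by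
    rw [div_lt_div_iff₀ (by positivity) hc]
    rw [lt_div_iff₀ hKK] at hcost
    nlinarith
  -- 1/c ≤ (1-δρ²)/V²
  have hsq : (ρ ^ 2 * V + σ2) ^ 2 ≤ V ^ 2 := by nlinarith
  have h2 : δ * ρ ^ 2 / V ^ 2 ≤ δ * ρ ^ 2 / (ρ ^ 2 * V + σ2) ^ 2 := by
    apply div_le_div_of_nonneg_left (by positivity) (by positivity) hsq
  have h3 : 1 / c ≤ (1 - δ * ρ ^ 2) / V ^ 2 := by
    rw [← hfoc]
    have : (1 - δ * ρ ^ 2) / V ^ 2 = 1 / V ^ 2 - δ * ρ ^ 2 / V ^ 2 := by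
      field_simp
    rw [this]
    linarith
  -- (1-δρ²)/V² ≤ K/σ⁴
  have h4 : (1 - δ * ρ ^ 2) / V ^ 2 ≤ (1 - δ * ρ ^ 2) * (1 - ρ ^ 2) ^ 2 / σ2 ^ 2 := by
    rw [div_le_div_iff₀ (by positivity) (by positivity)]
    have hs : 0 ≤ ((1 - ρ ^ 2) * V - σ2) * ((1 - ρ ^ 2) * V + σ2) := by
      apply mul_nonneg (by linarith)
      nlinarith
    nlinarith [mul_nonneg hK.le hs]
  linarith

set_option maxHeartbeats 4000000 in
/-- Under assumption (8), the steady-state precision is strictly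
decreasing in the marginal precision cost c. -/
theorem stmt_14 (ρ σ2 δ : ℝ) (hρ0 : 0 < ρ) (hρ1 : ρ < 1) (hσ : 0 < σ2)
    (hδ0 : 0 ≤ δ) (hδ1 : δ < 1)
    (c₁ c₂ : ℝ) (hc₁ : 0 < c₁) (h12 : c₁ < c₂)
    (hcost₁ : c₁ < σ2 ^ 2 / ((1 - δ * ρ ^ 2) * (1 - ρ ^ 2) ^ 2))
    (hcost₂ : c₂ < σ2 ^ 2 / ((1 - δ * ρ ^ 2) * (1 - ρ ^ 2) ^ 2))
    (V₁ V₂ : ℝ) (hV₁ : 0 < V₁) (hV₂ : 0 < V₂)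
    (hfoc₁ : 1 / V₁ ^ 2 - δ * ρ ^ 2 / (ρ ^ 2 * V₁ + σ2) ^ 2 = 1 / c₁)
    (hfoc₂ : 1 / V₂ ^ 2 - δ * ρ ^ 2 / (ρ ^ 2 * V₂ + σ2) ^ 2 = 1 / c₂)
    (x₁ x₂ : ℝ)
    (hx₁ : x₁ = 1 / V₁ - 1 / (ρ ^ 2 * V₁ + σ2))
    (hx₂ : x₂ = 1 / V₂ - 1 / (ρ ^ 2 * V₂ + σ2)) :
    x₂ < x₁ := by
  have hc₂ : 0 < c₂ := hc₁.trans h12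
  have hρ2 : ρ ^ 2 < 1 := by nlinarith
  have hb₁ := stmt_14_aux ρ σ2 δ c₁ V₁ hρ0 hρ1 hσ hδ0 hδ1 hc₁ hcost₁ hV₁ hfoc₁
  have hb₂ := stmt_14_aux ρ σ2 δ c₂ V₂ hρ0 hρ1 hσ hδ0 hδ1 hc₂ hcost₂ hV₂ hfoc₂
  have hW₁ : 0 < ρ ^ 2 * V₁ + σ2 := by positivity
  have hW₂ : 0 < ρ ^ 2 * V₂ + σ2 := by positivity
  have hVW₁ : V₁ < ρ ^ 2 * V₁ + σ2 := by nlinarith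
  have hVW₂ : V₂ < ρ ^ 2 * V₂ + σ2 := by nlinarith
  -- Step B : V₁ < V₂
  have hgap : 1 / V₂ ^ 2 - δ * ρ ^ 2 / (ρ ^ 2 * V₂ + σ2) ^ 2
      < 1 / V₁ ^ 2 - δ * ρ ^ 2 / (ρ ^ 2 * V₁ + σ2) ^ 2 := by
    rw [hfoc₁, hfoc₂]
    exact one_div_lt_one_div_of_lt hc₁ h12
  have e₁ : 1 / V₁ ^ 2 - δ * ρ ^ 2 / (ρ ^ 2 * V₁ + σ2) ^ 2
      = ((ρ ^ 2 * V₁ + σ2) ^ 2 - δ * ρ ^ 2 * V₁ ^ 2) / (V₁ ^ 2 * (ρ ^ 2 * V₁ + σ2) ^ 2) := by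
    field_simp
  have e₂ : 1 / V₂ ^ 2 - δ * ρ ^ 2 / (ρ ^ 2 * V₂ + σ2) ^ 2
      = ((ρ ^ 2 * V₂ + σ2) ^ 2 - δ * ρ ^ 2 * V₂ ^ 2) / (V₂ ^ 2 * (ρ ^ 2 * V₂ + σ2) ^ 2) := by
    field_simp
  rw [e₁, e₂, div_lt_div_iff₀ (by positivity) (by positivity)] at hgap
  -- the bracket factor is positive
  have hρ4 : ρ ^ 4 < 1 := pow_lt_one₀ hρ0.le hρ1 (by norm_num)
  have hδρ4 : δ * ρ ^ 4 < 1 := by nlinarith [pow_pos hρ0 4]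
  have hsq₁ : V₁ ^ 2 < (ρ ^ 2 * V₁ + σ2) ^ 2 := by nlinarith
  have hsq₂ : V₂ ^ 2 < (ρ ^ 2 * V₂ + σ2) ^ 2 := by nlinarith
  have hstep₁ : V₁ * V₂ ^ 2 < (ρ ^ 2 * V₁ + σ2) * (ρ ^ 2 * V₂ + σ2) ^ 2 := by
    nlinarith [mul_pos hW₁ (sub_pos.mpr hsq₂), mul_pos (pow_pos hV₂ 2) (sub_pos.mpr hVW₁)]
  have hstep₂ : V₂ * V₁ ^ 2 < (ρ ^ 2 * V₂ + σ2) * (ρ ^ 2 * V₁ + σ2) ^ 2 := by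
    nlinarith [mul_pos hW₂ (sub_pos.mpr hsq₁), mul_pos (pow_pos hV₁ 2) (sub_pos.mpr hVW₂)]
  have h1 : V₁ ^ 2 * V₂ ^ 2 * (ρ ^ 2 * V₁ + σ2)
      < (ρ ^ 2 * V₁ + σ2) ^ 2 * (ρ ^ 2 * V₂ + σ2) ^ 2 * V₁ := by
    nlinarith [mul_pos (mul_pos hV₁ hW₁) (sub_pos.mpr hstep₁)]
  have h2 : V₁ ^ 2 * V₂ ^ 2 * (ρ ^ 2 * V₂ + σ2)
      < (ρ ^ 2 * V₁ + σ2) ^ 2 * (ρ ^ 2 * V₂ + σ2) ^ 2 * V₂ := by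
    nlinarith [mul_pos (mul_pos hV₂ hW₂) (sub_pos.mpr hstep₂)]
  have hpos : 0 < V₁ ^ 2 * V₂ ^ 2 * ((ρ ^ 2 * V₁ + σ2) + (ρ ^ 2 * V₂ + σ2)) := by positivity
  have hB : 0 < (ρ ^ 2 * V₁ + σ2) ^ 2 * (ρ ^ 2 * V₂ + σ2) ^ 2 * (V₁ + V₂)
      - δ * ρ ^ 4 * V₁ ^ 2 * V₂ ^ 2 * ((ρ ^ 2 * V₁ + σ2) + (ρ ^ 2 * V₂ + σ2)) := by
    linarith [h1, h2, mul_pos (show (0:ℝ) < 1 - δ * ρ ^ 4 by linarith) hpos]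
  -- factor identity
  have hfac : ((ρ ^ 2 * V₂ + σ2) ^ 2 - δ * ρ ^ 2 * V₂ ^ 2) * (V₁ ^ 2 * (ρ ^ 2 * V₁ + σ2) ^ 2)
      - ((ρ ^ 2 * V₁ + σ2) ^ 2 - δ * ρ ^ 2 * V₁ ^ 2) * (V₂ ^ 2 * (ρ ^ 2 * V₂ + σ2) ^ 2)
      = (V₁ - V₂) * ((ρ ^ 2 * V₁ + σ2) ^ 2 * (ρ ^ 2 * V₂ + σ2) ^ 2 * (V₁ + V₂)
        - δ * ρ ^ 4 * V₁ ^ 2 * V₂ ^ 2 * ((ρ ^ 2 * V₁ + σ2) + (ρ ^ 2 * V₂ + σ2))) := by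
    ring
  have hV12 : V₁ < V₂ := by
    rcases lt_or_ge V₁ V₂ with h | h
    · exact h
    · exfalso
      have hnn : 0 ≤ (V₁ - V₂) * ((ρ ^ 2 * V₁ + σ2) ^ 2 * (ρ ^ 2 * V₂ + σ2) ^ 2 * (V₁ + V₂)
          - δ * ρ ^ 4 * V₁ ^ 2 * V₂ ^ 2 * ((ρ ^ 2 * V₁ + σ2) + (ρ ^ 2 * V₂ + σ2))) :=
        mul_nonneg (by linarith) hB.le
      linarith
  -- Step C : x is strictly decreasing in V
  have hxdiff : x₁ - x₂ = (V₂ - V₁) * ((ρ ^ 2 * V₁ + σ2) * (ρ ^ 2 * V₂ + σ2) - ρ ^ 2 * (V₁ * V₂))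
      / (V₁ * V₂ * ((ρ ^ 2 * V₁ + σ2) * (ρ ^ 2 * V₂ + σ2))) := by
    rw [hx₁, hx₂]
    field_simp
    ring
  have hnum : 0 < (V₂ - V₁) * ((ρ ^ 2 * V₁ + σ2) * (ρ ^ 2 * V₂ + σ2) - ρ ^ 2 * (V₁ * V₂)) := by
    have hVV : V₁ * V₂ < (ρ ^ 2 * V₁ + σ2) * (ρ ^ 2 * V₂ + σ2) := by
      nlinarith [mul_pos hW₁ (sub_pos.mpr hVW₂), mul_pos hV₂ (sub_pos.mpr hVW₁)]
    have hmm : ρ ^ 2 * (V₁ * V₂) < (ρ ^ 2 * V₁ + σ2) * (ρ ^ 2 * V₂ + σ2) := by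
      nlinarith [mul_pos (sub_pos.mpr hρ2) (mul_pos hV₁ hV₂)]
    exact mul_pos (by linarith) (by linarith)
  have hfin : 0 < x₁ - x₂ := by
    rw [hxdiff]
    positivity
  linarith
end

section
/- Let σ² > 0, c > 0, δ ∈ [0,1), and let 0 < ρ₁ < ρ₂ < 1 with c < σ⁴/((1 − δρ_i²)(1 − ρ_i²)²) for i = 1,2. For i = 1,2 let V_i > 0 satisfy 1/(V_i)² − δρ_i²/(ρ_i²V_i + σ²)² = 1/c, set x_i = 1/V_i − 1/(ρ_i²V_i + σ²) and C_i = V_i + c·x_i. Then C₁ < C₂; that is, the steady-state cost is strictly increasing in the autocorrelation. -/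
lemma stmt15_stepT (V s δ t1 t2 : ℝ) (hV : 0 < V) (hs : 0 < s) (hδ0 : 0 ≤ δ) (hδ1 : δ ≤ 1)
    (ht1 : 0 ≤ t1) (ht12 : t1 < t2) :
    ((1-δ)*t2*V+s)/(t2*V+s)^2 < ((1-δ)*t1*V+s)/(t1*V+s)^2 := by
  have w1 : 0 < t1*V+s := by nlinarith
  have w2 : 0 < t2*V+s := by nlinarith
  rw [div_lt_div_iff₀ (by positivity) (by positivity)]
  have key : ((1-δ)*t1*V+s)*(t2*V+s)^2 - ((1-δ)*t2*V+s)*(t1*V+s)^2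
      = V*(t2-t1)*((1+δ)*s^2 + s*V*(t1+t2) + (1-δ)*t1*t2*V^2) := by ring
  have h2 : 0 < t2 := lt_of_le_of_lt ht1 ht12
  have hbr : 0 < (1+δ)*s^2 + s*V*(t1+t2) + (1-δ)*t1*t2*V^2 := by
    have : 0 ≤ (1-δ)*t1*t2*V^2 := by
      nlinarith [mul_nonneg (mul_nonneg (mul_nonneg (sub_nonneg.2 hδ1) ht1) h2.le) (sq_nonneg V)]
    nlinarith [mul_pos hs hV, sq_nonneg s]
  nlinarith [mul_pos (mul_pos (sub_pos.2 ht12) hV) hbr]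

lemma stmt15_stepV (t s δ Va Vb : ℝ) (hVa : 0 < Va) (hab : Va ≤ Vb) (hs : 0 < s)
    (hδ0 : 0 ≤ δ) (hδ1 : δ ≤ 1) (ht : 0 ≤ t) :
    ((1-δ)*t*Vb+s)/(t*Vb+s)^2 ≤ ((1-δ)*t*Va+s)/(t*Va+s)^2 := by
  have w1 : 0 < t*Va+s := by nlinarith
  have w2 : 0 < t*Vb+s := by nlinarith
  rw [div_le_div_iff₀ (by positivity) (by positivity)]
  have key : ((1-δ)*t*Va+s)*(t*Vb+s)^2 - ((1-δ)*t*Vb+s)*(t*Va+s)^2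
      = t*(Vb-Va)*((1+δ)*s^2 + s*t*(Va+Vb) + (1-δ)*t^2*(Va*Vb)) := by ring
  have hbr : 0 ≤ (1+δ)*s^2 + s*t*(Va+Vb) + (1-δ)*t^2*(Va*Vb) := by
    have h1 : 0 ≤ (1-δ)*t^2*(Va*Vb) := by
      nlinarith [mul_nonneg (mul_nonneg (mul_nonneg (sub_nonneg.2 hδ1) (sq_nonneg t)) hVa.le) (le_trans hVa.le hab)]
    have hVb : 0 < Vb := lt_of_lt_of_le hVa hab
    nlinarith [sq_nonneg s, mul_nonneg (mul_nonneg hs.le ht) (by nlinarith : (0:ℝ) ≤ Va + Vb)]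
  nlinarith [mul_nonneg (mul_nonneg ht (sub_nonneg.2 hab)) hbr]

lemma stmt15_stepI (V x s μ : ℝ) (hx : 0 < x) (hxV : x < V) (hVs : V < x + s)
    (hμ0 : 0 < μ) (hμ1 : μ ≤ 1) :
    1/V^2 - x/(V*(x+s)^2) ≤ 1/(μ*V)^2 - μ*x/((μ*V)*(μ*x+s)^2) := by
  have hs : 0 < s := by linarith
  have hV : 0 < V := hx.trans hxV
  have hW : 0 < x + s := by linarith
  have hw : 0 < μ*x + s := by positivity
  have h : (1/(μ*V)^2 - μ*x/((μ*V)*(μ*x+s)^2)) - (1/V^2 - x/(V*(x+s)^2))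
      = ((1-μ)*((1+μ)*(x+s)^2*(μ*x+s)^2 - μ^2*x^2*V*((1+μ)*x+2*s)))
        / (μ^2*V^2*(x+s)^2*(μ*x+s)^2) := by
    field_simp
    ring
  have hbr : 0 ≤ (1+μ)*(x+s)^2*(μ*x+s)^2 - μ^2*x^2*V*((1+μ)*x+2*s) := by
    have h1 : μ^2*x^2*V*((1+μ)*x+2*s) ≤ μ^2*x^2*(x+s)*((1+μ)*x+2*s) := by
      have hpos : 0 < (1+μ)*x+2*s := by nlinarith
      nlinarith [mul_nonneg (mul_nonneg (sq_nonneg μ) (sq_nonneg x)) (mul_nonneg (sub_nonneg.2 hVs.le) hpos.le)]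
    have h2 : (1+μ)*(x+s)^2*(μ*x+s)^2 - μ^2*x^2*(x+s)*((1+μ)*x+2*s)
        = (x+s)*(s*((1+μ)*(x+s)*(2*μ*x+s) - (1-μ)*μ^2*x^2)) := by ring
    have h3 : 0 ≤ (1+μ)*(x+s)*(2*μ*x+s) - (1-μ)*μ^2*x^2 := by
      nlinarith [mul_pos hx hs, mul_pos hμ0 (mul_pos hx hx), sq_nonneg s,
        mul_pos (mul_pos hμ0 hμ0) (mul_pos hx hx)]
    nlinarith [mul_nonneg (mul_nonneg hW.le hs.le) h3]
  have hnum : 0 ≤ (1-μ)*((1+μ)*(x+s)^2*(μ*x+s)^2 - μ^2*x^2*V*((1+μ)*x+2*s)) :=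
    mul_nonneg (by linarith) hbr
  have hden : 0 < μ^2*V^2*(x+s)^2*(μ*x+s)^2 := by positivity
  nlinarith [div_nonneg hnum hden.le]

lemma stmt15_stepII (p q x s : ℝ) (hp : 0 < p) (hpq : p ≤ q) (hq : q ≤ x + s)
    (hx : 0 < x) (hs : 0 < s) :
    1/q^2 - x/(q*(x+s)^2) ≤ 1/p^2 - x/(p*(x+s)^2) := by
  have hW : 0 < x + s := by linarith
  have hq0 : 0 < q := lt_of_lt_of_le hp hpq
  have h : (1/p^2 - x/(p*(x+s)^2)) - (1/q^2 - x/(q*(x+s)^2))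
      = ((q-p)*((x+s)^2*(q+p) - x*(p*q))) / (p^2*q^2*(x+s)^2) := by
    field_simp
    ring
  have hnum : 0 ≤ (q-p)*((x+s)^2*(q+p) - x*(p*q)) := by
    have h1 : x*(p*q) ≤ (x+s)^2*(q+p) := by
      nlinarith [mul_pos hp hq0, mul_pos hW hp, mul_pos hW hq0,
        mul_nonneg (sub_nonneg.2 hq) (mul_pos hW hp).le]
    nlinarith [mul_nonneg (sub_nonneg.2 hpq) (sub_nonneg.2 h1)]
  have hden : 0 < p^2*q^2*(x+s)^2 := by positivity
  nlinarith [div_nonneg hnum hden.le]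

set_option maxHeartbeats 1600000

/-- Under assumption (8), the steady-state cost C* = V* + c·x* is
strictly increasing in the autocorrelation ρ. -/
theorem stmt_15 (σ2 c δ : ℝ) (hσ : 0 < σ2) (hc : 0 < c) (hδ0 : 0 ≤ δ) (hδ1 : δ < 1)
    (ρ₁ ρ₂ : ℝ) (hρ₁ : 0 < ρ₁) (h12 : ρ₁ < ρ₂) (hρ₂ : ρ₂ < 1)
    (hcost₁ : c < σ2 ^ 2 / ((1 - δ * ρ₁ ^ 2) * (1 - ρ₁ ^ 2) ^ 2))
    (hcost₂ : c < σ2 ^ 2 / ((1 - δ * ρ₂ ^ 2) * (1 - ρ₂ ^ 2) ^ 2))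
    (V₁ V₂ : ℝ) (hV₁ : 0 < V₁) (hV₂ : 0 < V₂)
    (hfoc₁ : 1 / V₁ ^ 2 - δ * ρ₁ ^ 2 / (ρ₁ ^ 2 * V₁ + σ2) ^ 2 = 1 / c)
    (hfoc₂ : 1 / V₂ ^ 2 - δ * ρ₂ ^ 2 / (ρ₂ ^ 2 * V₂ + σ2) ^ 2 = 1 / c)
    (x₁ x₂ C₁ C₂ : ℝ)
    (hx₁ : x₁ = 1 / V₁ - 1 / (ρ₁ ^ 2 * V₁ + σ2))
    (hx₂ : x₂ = 1 / V₂ - 1 / (ρ₂ ^ 2 * V₂ + σ2))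
    (hC₁ : C₁ = V₁ + c * x₁) (hC₂ : C₂ = V₂ + c * x₂) :
    C₁ < C₂ := by
  have ht1 : 0 < ρ₁ ^ 2 := by positivity
  have hρ₂0 : 0 < ρ₂ := hρ₁.trans h12
  have ht2 : 0 < ρ₂ ^ 2 := by positivity
  have ht12 : ρ₁ ^ 2 < ρ₂ ^ 2 := by nlinarith
  have ht2lt : ρ₂ ^ 2 < 1 := by nlinarith
  have ht1lt : ρ₁ ^ 2 < 1 := ht12.trans ht2lt
  have hW1 : 0 < ρ₁ ^ 2 * V₁ + σ2 := by positivity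
  have hW2 : 0 < ρ₂ ^ 2 * V₂ + σ2 := by positivity
  have hV₁' : V₁ ≠ 0 := ne_of_gt hV₁
  have hV₂' : V₂ ≠ 0 := ne_of_gt hV₂
  have hW1' : (ρ₁ ^ 2 * V₁ + σ2) ≠ 0 := ne_of_gt hW1
  have hW2' : (ρ₂ ^ 2 * V₂ + σ2) ≠ 0 := ne_of_gt hW2
  have hc' : c ≠ 0 := ne_of_gt hc
  -- polynomial form of the FOCs
  have hp1 : c * ((ρ₁ ^ 2 * V₁ + σ2) ^ 2 - δ * ρ₁ ^ 2 * V₁ ^ 2)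
      = V₁ ^ 2 * (ρ₁ ^ 2 * V₁ + σ2) ^ 2 := by
    have h := hfoc₁
    field_simp at h
    linear_combination h
  have hp2 : c * ((ρ₂ ^ 2 * V₂ + σ2) ^ 2 - δ * ρ₂ ^ 2 * V₂ ^ 2)
      = V₂ ^ 2 * (ρ₂ ^ 2 * V₂ + σ2) ^ 2 := by
    have h := hfoc₂
    field_simp at h
    linear_combination h
  -- bound from assumption (8): (1 - ρ₁²) V₁ < σ2
  have hbd1 : (1 - ρ₁ ^ 2) * V₁ < σ2 := by
    by_contra hb
    push_neg at hb
    have hd : 0 < (1 - δ * ρ₁ ^ 2) * (1 - ρ₁ ^ 2) ^ 2 := by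
      have e1 : δ * ρ₁ ^ 2 ≤ ρ₁ ^ 2 := by nlinarith [mul_le_mul_of_nonneg_right hδ1.le ht1.le]
      exact mul_pos (by linarith) (pow_pos (by linarith : (0:ℝ) < 1 - ρ₁ ^ 2) 2)
    have hcd : c * ((1 - δ * ρ₁ ^ 2) * (1 - ρ₁ ^ 2) ^ 2) < σ2 ^ 2 := by
      have := (lt_div_iff₀ hd).1 hcost₁
      linarith
    have hWV : ρ₁ ^ 2 * V₁ + σ2 ≤ V₁ := by nlinarith
    have h3 : c * (1 - δ * ρ₁ ^ 2) < V₁ ^ 2 := by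
      have hsq : σ2 ^ 2 ≤ (1 - ρ₁ ^ 2) ^ 2 * V₁ ^ 2 := by nlinarith
      nlinarith [sq_nonneg (1 - ρ₁ ^ 2)]
    nlinarith [mul_pos hW1 hW1, mul_nonneg (mul_nonneg hδ0 ht1.le)
      (by nlinarith : (0:ℝ) ≤ V₁ ^ 2 - (ρ₁ ^ 2 * V₁ + σ2) ^ 2)]
  rcases le_or_gt V₁ V₂ with hV12 | hV12
  · -- Case 1 : V₁ ≤ V₂, use the J-representation
    have j1 : V₁ + c * (1 / V₁ - 1 / (ρ₁ ^ 2 * V₁ + σ2))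
        = 2 * V₁ - c * (((1-δ) * ρ₁ ^ 2 * V₁ + σ2) / (ρ₁ ^ 2 * V₁ + σ2) ^ 2) := by
      field_simp
      linear_combination hp1
    have j2 : V₂ + c * (1 / V₂ - 1 / (ρ₂ ^ 2 * V₂ + σ2))
        = 2 * V₂ - c * (((1-δ) * ρ₂ ^ 2 * V₂ + σ2) / (ρ₂ ^ 2 * V₂ + σ2) ^ 2) := by
      field_simp
      linear_combination hp2
    have s1 := stmt15_stepV (ρ₁ ^ 2) σ2 δ V₁ V₂ hV₁ hV12 hσ hδ0 hδ1.le ht1.le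
    have s2 := stmt15_stepT V₂ σ2 δ (ρ₁ ^ 2) (ρ₂ ^ 2) hV₂ hσ hδ0 hδ1.le ht1.le ht12
    rw [hC₁, hC₂, hx₁, hx₂, j1, j2]
    have m1 : c * (((1-δ) * ρ₁ ^ 2 * V₂ + σ2) / (ρ₁ ^ 2 * V₂ + σ2) ^ 2)
        ≤ c * (((1-δ) * ρ₁ ^ 2 * V₁ + σ2) / (ρ₁ ^ 2 * V₁ + σ2) ^ 2) :=
      mul_le_mul_of_nonneg_left s1 hc.le
    have m2 : c * (((1-δ) * ρ₂ ^ 2 * V₂ + σ2) / (ρ₂ ^ 2 * V₂ + σ2) ^ 2)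
        < c * (((1-δ) * ρ₁ ^ 2 * V₂ + σ2) / (ρ₁ ^ 2 * V₂ + σ2) ^ 2) :=
      (mul_lt_mul_iff_right₀ hc).2 s2
    linarith
  · -- Case 2 : V₂ < V₁.  First show W₁ < W₂.
    have hWlt : ρ₁ ^ 2 * V₁ + σ2 < ρ₂ ^ 2 * V₂ + σ2 := by
      by_contra hWge
      push_neg at hWge
      have hx12 : ρ₂ ^ 2 * V₂ ≤ ρ₁ ^ 2 * V₁ := by linarith
      have hx1pos : 0 < ρ₁ ^ 2 * V₁ := by positivity
      have hμ0 : 0 < (ρ₂ ^ 2 * V₂) / (ρ₁ ^ 2 * V₁) := by positivity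
      have hμ1 : (ρ₂ ^ 2 * V₂) / (ρ₁ ^ 2 * V₁) ≤ 1 := by
        rw [div_le_one hx1pos]; exact hx12
      have hxV : ρ₁ ^ 2 * V₁ < V₁ := by nlinarith
      have hVs : V₁ < ρ₁ ^ 2 * V₁ + σ2 := by nlinarith
      have hpq : V₂ ≤ (ρ₂ ^ 2 * V₂) / (ρ₁ ^ 2 * V₁) * V₁ := by
        rw [div_mul_eq_mul_div, le_div_iff₀ hx1pos]
        nlinarith [mul_le_mul_of_nonneg_right ht12.le (mul_pos hV₂ hV₁).le]
      have hqb : (ρ₂ ^ 2 * V₂) / (ρ₁ ^ 2 * V₁) * V₁ ≤ ρ₂ ^ 2 * V₂ + σ2 := by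
        rw [div_mul_eq_mul_div, div_le_iff₀ hx1pos]
        nlinarith [mul_le_mul_of_nonneg_left hx12 hσ.le,
          mul_le_mul_of_nonneg_left hVs.le (mul_pos ht2 hV₂).le]
      have hμx : (ρ₂ ^ 2 * V₂) / (ρ₁ ^ 2 * V₁) * (ρ₁ ^ 2 * V₁) = ρ₂ ^ 2 * V₂ := by
        field_simp
      have sI := stmt15_stepI V₁ (ρ₁ ^ 2 * V₁) σ2 ((ρ₂ ^ 2 * V₂) / (ρ₁ ^ 2 * V₁))
        hx1pos hxV hVs hμ0 hμ1
      rw [hμx] at sI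
      have sII := stmt15_stepII V₂ ((ρ₂ ^ 2 * V₂) / (ρ₁ ^ 2 * V₁) * V₁) (ρ₂ ^ 2 * V₂) σ2
        hV₂ hpq hqb (by positivity) hσ
      have hg1 : (ρ₁ ^ 2 * V₁) / (V₁ * (ρ₁ ^ 2 * V₁ + σ2) ^ 2)
          = ρ₁ ^ 2 / (ρ₁ ^ 2 * V₁ + σ2) ^ 2 := by
        field_simp
      have hg2 : (ρ₂ ^ 2 * V₂) / (V₂ * (ρ₂ ^ 2 * V₂ + σ2) ^ 2)
          = ρ₂ ^ 2 / (ρ₂ ^ 2 * V₂ + σ2) ^ 2 := by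
        field_simp
      rw [hg1] at sI
      rw [hg2] at sII
      have hqlt : ρ₁ ^ 2 / (ρ₁ ^ 2 * V₁ + σ2) ^ 2 < ρ₂ ^ 2 / (ρ₂ ^ 2 * V₂ + σ2) ^ 2 := by
        have hle : (ρ₂ ^ 2 * V₂ + σ2) ^ 2 ≤ (ρ₁ ^ 2 * V₁ + σ2) ^ 2 :=
          pow_le_pow_left₀ hW2.le hWge 2
        have h1 : ρ₁ ^ 2 / (ρ₁ ^ 2 * V₁ + σ2) ^ 2 ≤ ρ₁ ^ 2 / (ρ₂ ^ 2 * V₂ + σ2) ^ 2 :=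
          div_le_div_of_nonneg_left ht1.le (by positivity) hle
        have h2 : ρ₁ ^ 2 / (ρ₂ ^ 2 * V₂ + σ2) ^ 2 < ρ₂ ^ 2 / (ρ₂ ^ 2 * V₂ + σ2) ^ 2 :=
          div_lt_div_of_pos_right ht12 (by positivity)
        linarith
      have hfd : 1 / V₂ ^ 2 - ρ₂ ^ 2 / (ρ₂ ^ 2 * V₂ + σ2) ^ 2
          - (1 / V₁ ^ 2 - ρ₁ ^ 2 / (ρ₁ ^ 2 * V₁ + σ2) ^ 2)
          = (δ - 1) * (ρ₂ ^ 2 / (ρ₂ ^ 2 * V₂ + σ2) ^ 2 - ρ₁ ^ 2 / (ρ₁ ^ 2 * V₁ + σ2) ^ 2) := by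
        linear_combination hfoc₂ - hfoc₁
      linarith [sI, sII, hfd, mul_neg_of_neg_of_pos (by linarith : δ - 1 < 0)
        (by linarith : 0 < ρ₂ ^ 2 / (ρ₂ ^ 2 * V₂ + σ2) ^ 2 - ρ₁ ^ 2 / (ρ₁ ^ 2 * V₁ + σ2) ^ 2)]
    -- Case 2 conclusion via the K-representation
    have hcV : V₁ ^ 2 ≤ c := by
      have h0 : 0 ≤ c * (δ * ρ₁ ^ 2 * V₁ ^ 2) :=
        mul_nonneg hc.le (mul_nonneg (mul_nonneg hδ0 ht1.le) (sq_nonneg V₁))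
      have h1 : V₁ ^ 2 * (ρ₁ ^ 2 * V₁ + σ2) ^ 2 ≤ c * (ρ₁ ^ 2 * V₁ + σ2) ^ 2 := by
        linarith [hp1, h0]
      exact le_of_mul_le_mul_right h1 (by positivity)
    have hK : (V₂ + c * (1 / V₂ - 1 / (ρ₂ ^ 2 * V₂ + σ2)))
        - (V₁ + c * (1 / V₁ - 1 / (ρ₁ ^ 2 * V₁ + σ2)))
        = (V₁ - V₂) * (c - V₁ * V₂) / (V₁ * V₂)
          + c * ((ρ₂ ^ 2 * V₂ + σ2) - (ρ₁ ^ 2 * V₁ + σ2))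
            / ((ρ₁ ^ 2 * V₁ + σ2) * (ρ₂ ^ 2 * V₂ + σ2)) := by
      field_simp
      ring
    have hterm1 : 0 < (V₁ - V₂) * (c - V₁ * V₂) / (V₁ * V₂) := by
      apply div_pos _ (mul_pos hV₁ hV₂)
      apply mul_pos (by linarith)
      linarith [hcV, mul_pos hV₁ (sub_pos.2 hV12)]
    have hterm2 : 0 < c * ((ρ₂ ^ 2 * V₂ + σ2) - (ρ₁ ^ 2 * V₁ + σ2))
        / ((ρ₁ ^ 2 * V₁ + σ2) * (ρ₂ ^ 2 * V₂ + σ2)) := by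
      apply div_pos _ (mul_pos hW1 hW2)
      apply mul_pos hc (by linarith)
    rw [hC₁, hC₂, hx₁, hx₂]
    linarith
end

section
/- Let ρ ∈ (0,1), σ² > 0, c > 0, and let 0 ≤ δ₁ < δ₂ < 1 with c < σ⁴/((1 − δ_i ρ²)(1 − ρ²)²) for i = 1,2. For i = 1,2 let V_i > 0 satisfy 1/(V_i)² − δ_i ρ²/(ρ²V_i + σ²)² = 1/c, set x_i = 1/V_i − 1/(ρ²V_i + σ²) and C_i = V_i + c·x_i. Then C₁ > C₂; that is, the steady-state cost is strictly decreasing in the discount factor. -/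
/-- Polynomial form of the first-order condition. -/
lemma stmt16_foc_poly (ρ σ2 c δ V : ℝ) (hρ0 : 0 < ρ) (hσ : 0 < σ2) (hc : 0 < c)
    (hV : 0 < V)
    (hfoc : 1 / V ^ 2 - δ * ρ ^ 2 / (ρ ^ 2 * V + σ2) ^ 2 = 1 / c) :
    c*(ρ^2*V+σ2)^2 - c*δ*ρ^2*V^2 = V^2*(ρ^2*V+σ2)^2 := by
  have hA : (0:ℝ) < ρ^2*V+σ2 := by positivity
  field_simp at hfoc
  linear_combination hfoc

/-- From the polynomial FOC: δρ²V² < A². -/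
lemma stmt16_p (c δ ρ V A : ℝ) (hc : 0 < c) (hV : 0 < V) (hA : 0 < A)
    (e : c*A^2 - c*δ*ρ^2*V^2 = V^2*A^2) : δ*ρ^2*V^2 < A^2 := by
  by_contra hn
  push_neg at hn
  have h0 : (0:ℝ) < c * (A^2 - δ*ρ^2*V^2) := by
    have hh : c * (A^2 - δ*ρ^2*V^2) = V^2*A^2 := by linear_combination e
    rw [hh]; positivity
  have h1 : c * (A^2 - δ*ρ^2*V^2) ≤ 0 :=
    mul_nonpos_of_nonneg_of_nonpos (le_of_lt hc) (by linarith)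
  linarith

/-- Assumption (8) forces V < A = ρ²V + σ². -/
lemma stmt16_VA (ρ σ2 c δ V : ℝ) (hρ0 : 0 < ρ) (hρ2 : ρ^2 < 1) (hσ : 0 < σ2)
    (hc : 0 < c) (hδ : 0 ≤ δ) (hδρ : δ*ρ^2 < 1) (hV : 0 < V)
    (e : c*(ρ^2*V+σ2)^2 - c*δ*ρ^2*V^2 = V^2*(ρ^2*V+σ2)^2)
    (hcost : c < σ2 ^ 2 / ((1 - δ * ρ ^ 2) * (1 - ρ ^ 2) ^ 2)) :
    V < ρ^2*V+σ2 := by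
  by_contra hn
  push_neg at hn
  have hA : (0:ℝ) < ρ^2*V+σ2 := by positivity
  have hden : (0:ℝ) < (1 - δ * ρ ^ 2) * (1 - ρ ^ 2) ^ 2 := by
    have h1 : (0:ℝ) < 1 - δ*ρ^2 := by linarith
    have h2 : (0:ℝ) < (1-ρ^2)^2 := pow_pos (by linarith) 2
    exact mul_pos h1 h2
  rw [lt_div_iff₀ hden] at hcost
  have hσV : σ2 ≤ (1-ρ^2)*V := by nlinarith [hn]
  have hcV : c*(1-δ*ρ^2) < V^2 := by
    have h1 : c * ((1 - δ * ρ ^ 2) * (1 - ρ ^ 2) ^ 2) < ((1-ρ^2)*V)^2 := by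
      calc c * ((1 - δ * ρ ^ 2) * (1 - ρ ^ 2) ^ 2) < σ2^2 := hcost
      _ ≤ ((1-ρ^2)*V)^2 := by
          apply pow_le_pow_left₀ (le_of_lt hσ) hσV
    have h2 : (0:ℝ) < (1-ρ^2)^2 := pow_pos (by linarith) 2
    nlinarith
  have hVA2 : (ρ^2*V+σ2)^2 ≤ V^2 := by nlinarith
  have hkey : V^2*(ρ^2*V+σ2)^2 ≤ c*(1-δ*ρ^2)*(ρ^2*V+σ2)^2 := by
    have h3 : c*δ*ρ^2*(ρ^2*V+σ2)^2 ≤ c*δ*ρ^2*V^2 := by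
      apply mul_le_mul_of_nonneg_left hVA2
      positivity
    nlinarith [e]
  nlinarith [mul_pos hA hA]

/-- Monotonicity in δ of the fixed point: V₂ < V₁. -/
lemma stmt16_Vlt (ρ c δ₁ δ₂ V₁ V₂ A₁ A₂ : ℝ) (hρ0 : 0 < ρ) (hc : 0 < c)
    (hδ₁ : 0 ≤ δ₁) (h12 : δ₁ < δ₂)
    (hV₁ : 0 < V₁) (hV₂ : 0 < V₂) (hA₁ : 0 < A₁) (hA₂ : 0 < A₂)
    (hAd : A₁ - A₂ = ρ^2*(V₁-V₂))
    (q₁ : ρ^2*V₁ < A₁) (q₂ : ρ^2*V₂ < A₂)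
    (p₁ : δ₁*ρ^2*V₁^2 < A₁^2) (p₁' : δ₁*ρ^2*V₂^2 < A₂^2)
    (e₁ : c*A₁^2 - c*δ₁*ρ^2*V₁^2 = V₁^2*A₁^2)
    (e₂ : c*A₂^2 - c*δ₂*ρ^2*V₂^2 = V₂^2*A₂^2) :
    V₂ < V₁ := by
  by_contra h
  push_neg at h
  have hbr : 0 ≤ A₁^2*A₂^2*(V₁+V₂) - δ₁*ρ^4*V₁^2*V₂^2*(A₁+A₂) := by
    have t1 : 0 ≤ ρ^2*V₁^2*A₁*(A₂^2 - δ₁*ρ^2*V₂^2) := by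
      apply mul_nonneg (by positivity); linarith
    have t2 : 0 ≤ V₁*A₁*A₂^2*(A₁ - ρ^2*V₁) := by
      apply mul_nonneg (by positivity); linarith
    have t3 : 0 ≤ ρ^2*V₂^2*A₂*(A₁^2 - δ₁*ρ^2*V₁^2) := by
      apply mul_nonneg (by positivity); linarith
    have t4 : 0 ≤ V₂*A₂*A₁^2*(A₂ - ρ^2*V₂) := by
      apply mul_nonneg (by positivity); linarith
    nlinarith [t1, t2, t3, t4]
  have hD : 0 ≤ A₁^2*A₂^2*(V₂^2-V₁^2) - δ₁*ρ^2*V₁^2*V₂^2*(A₂^2-A₁^2) := by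
    have hid : A₁^2*A₂^2*(V₂^2-V₁^2) - δ₁*ρ^2*V₁^2*V₂^2*(A₂^2-A₁^2)
        = (V₂-V₁)*(A₁^2*A₂^2*(V₁+V₂) - δ₁*ρ^4*V₁^2*V₂^2*(A₁+A₂)) := by
      linear_combination (δ₁*ρ^2*V₁^2*V₂^2*(A₁+A₂)) * hAd
    rw [hid]
    exact mul_nonneg (by linarith) hbr
  have hcD : c * (A₁^2*A₂^2*(V₂^2-V₁^2) - δ₁*ρ^2*V₁^2*V₂^2*(A₂^2-A₁^2))
      = -(c*(δ₂-δ₁)*ρ^2*V₁^2*V₂^2*A₁^2) := by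
    linear_combination V₂^2*A₂^2*e₁ - V₁^2*A₁^2*e₂
  have hpos : (0:ℝ) < c*(δ₂-δ₁)*ρ^2*V₁^2*V₂^2*A₁^2 := by
    have hd : (0:ℝ) < δ₂ - δ₁ := sub_pos.2 h12
    positivity
  have hnn : 0 ≤ c * (A₁^2*A₂^2*(V₂^2-V₁^2) - δ₁*ρ^2*V₁^2*V₂^2*(A₂^2-A₁^2)) :=
    mul_nonneg (le_of_lt hc) hD
  linarith

/-- Positivity of the bracket Q. -/
lemma stmt16_Q (ρ c δ₁ δ₂ V₁ V₂ A₁ A₂ : ℝ) (hρ0 : 0 < ρ) (hρ1 : ρ < 1) (hc : 0 < c)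
    (hδ₁ : 0 ≤ δ₁) (h12 : δ₁ < δ₂) (hδ₂ : δ₂ < 1)
    (hV₁ : 0 < V₁) (hV₂ : 0 < V₂) (hA₁ : 0 < A₁) (hA₂ : 0 < A₂)
    (hAd : A₁ - A₂ = ρ^2*(V₁-V₂))
    (q₁ : ρ^2*V₁ < A₁) (hVA₂ : V₂ < A₂)
    (e₁ : c*A₁^2 - c*δ₁*ρ^2*V₁^2 = V₁^2*A₁^2)
    (e₂ : c*A₂^2 - c*δ₂*ρ^2*V₂^2 = V₂^2*A₂^2) :
    0 < V₁*V₂*A₁*A₂ + c*ρ^2*V₁*V₂ - c*A₁*A₂ := by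
  have key : 2*V₁^2*V₂^2*A₁^2*A₂^2 + 2*c*ρ^2*V₁^2*V₂^2*A₁*A₂ - 2*c*V₁*V₂*A₁^2*A₂^2
      = c*((V₁-V₂)^2*(A₁^2*A₂^2 - ρ^6*V₁^2*V₂^2)
          + ρ^2*V₁^2*V₂^2*((1-δ₁)*A₂^2 + (1-δ₂)*A₁^2)) := by
    linear_combination (-(V₂^2*A₂^2))*e₁ + (-(V₁^2*A₁^2))*e₂
      - c*ρ^2*V₁^2*V₂^2*(A₁-A₂+ρ^2*(V₁-V₂))*hAd
  have hAgt : ρ^3*V₁*V₂ ≤ A₁*A₂ := by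
    have h1 : ρ^2*V₁*A₂ ≤ A₁*A₂ := le_of_lt (mul_lt_mul_of_pos_right q₁ hA₂)
    have h2 : ρ^2*V₁*V₂ ≤ ρ^2*V₁*A₂ :=
      mul_le_mul_of_nonneg_left (le_of_lt hVA₂) (by positivity)
    have h3 : ρ^3*V₁*V₂ ≤ ρ^2*V₁*V₂ := by
      have := mul_nonneg (mul_nonneg (sq_nonneg ρ) (by linarith : (0:ℝ) ≤ 1-ρ))
        (le_of_lt (mul_pos hV₁ hV₂))
      nlinarith [this]
    linarith
  have h1 : 0 ≤ (V₁-V₂)^2*(A₁^2*A₂^2 - ρ^6*V₁^2*V₂^2) := by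
    apply mul_nonneg (sq_nonneg _)
    nlinarith [mul_pos (mul_pos hV₁ hV₂) (pow_pos hρ0 3), mul_pos hA₁ hA₂]
  have h2 : 0 < ρ^2*V₁^2*V₂^2*((1-δ₁)*A₂^2 + (1-δ₂)*A₁^2) := by
    have hδ₁1 : δ₁ < 1 := lt_trans h12 hδ₂
    have hs : (0:ℝ) < (1-δ₁)*A₂^2 + (1-δ₂)*A₁^2 := by
      have u1 : (0:ℝ) < (1-δ₁)*A₂^2 := by
        apply mul_pos (by linarith); positivity
      have u2 : (0:ℝ) < (1-δ₂)*A₁^2 := by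
        apply mul_pos (by linarith); positivity
      linarith
    positivity
  have hE : 0 < 2*V₁^2*V₂^2*A₁^2*A₂^2 + 2*c*ρ^2*V₁^2*V₂^2*A₁*A₂ - 2*c*V₁*V₂*A₁^2*A₂^2 := by
    rw [key]
    have hsum : 0 < (V₁-V₂)^2*(A₁^2*A₂^2 - ρ^6*V₁^2*V₂^2)
        + ρ^2*V₁^2*V₂^2*((1-δ₁)*A₂^2 + (1-δ₂)*A₁^2) := by linarith
    positivity
  by_contra hn
  push_neg at hn
  have hk : (0:ℝ) ≤ 2*(V₁*V₂*A₁*A₂) := by positivity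
  have hmp := mul_nonpos_of_nonneg_of_nonpos hk hn
  nlinarith [hE]

set_option maxHeartbeats 1000000 in
/-- Under assumption (8), the steady-state cost C* = V* + c·x* is
strictly decreasing in the discount factor δ. -/
theorem stmt_16 (ρ σ2 c : ℝ) (hρ0 : 0 < ρ) (hρ1 : ρ < 1) (hσ : 0 < σ2) (hc : 0 < c)
    (δ₁ δ₂ : ℝ) (hδ₁ : 0 ≤ δ₁) (h12 : δ₁ < δ₂) (hδ₂ : δ₂ < 1)
    (hcost₁ : c < σ2 ^ 2 / ((1 - δ₁ * ρ ^ 2) * (1 - ρ ^ 2) ^ 2))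
    (hcost₂ : c < σ2 ^ 2 / ((1 - δ₂ * ρ ^ 2) * (1 - ρ ^ 2) ^ 2))
    (V₁ V₂ : ℝ) (hV₁ : 0 < V₁) (hV₂ : 0 < V₂)
    (hfoc₁ : 1 / V₁ ^ 2 - δ₁ * ρ ^ 2 / (ρ ^ 2 * V₁ + σ2) ^ 2 = 1 / c)
    (hfoc₂ : 1 / V₂ ^ 2 - δ₂ * ρ ^ 2 / (ρ ^ 2 * V₂ + σ2) ^ 2 = 1 / c)
    (x₁ x₂ C₁ C₂ : ℝ)
    (hx₁ : x₁ = 1 / V₁ - 1 / (ρ ^ 2 * V₁ + σ2))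
    (hx₂ : x₂ = 1 / V₂ - 1 / (ρ ^ 2 * V₂ + σ2))
    (hC₁ : C₁ = V₁ + c * x₁) (hC₂ : C₂ = V₂ + c * x₂) :
    C₂ < C₁ := by
  have hρ2 : ρ^2 < 1 := by nlinarith
  have hδ₁1 : δ₁ < 1 := lt_trans h12 hδ₂
  have hδ₂0 : 0 ≤ δ₂ := le_of_lt (lt_of_le_of_lt hδ₁ h12)
  have hδρ₁ : δ₁*ρ^2 < 1 := by nlinarith
  have hδρ₂ : δ₂*ρ^2 < 1 := by nlinarith
  have e₁ := stmt16_foc_poly ρ σ2 c δ₁ V₁ hρ0 hσ hc hV₁ hfoc₁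
  have e₂ := stmt16_foc_poly ρ σ2 c δ₂ V₂ hρ0 hσ hc hV₂ hfoc₂
  have hA₁ : (0:ℝ) < ρ^2*V₁+σ2 := by positivity
  have hA₂ : (0:ℝ) < ρ^2*V₂+σ2 := by positivity
  have hAd : (ρ^2*V₁+σ2) - (ρ^2*V₂+σ2) = ρ^2*(V₁-V₂) := by ring
  have q₁ : ρ^2*V₁ < ρ^2*V₁+σ2 := by linarith
  have q₂ : ρ^2*V₂ < ρ^2*V₂+σ2 := by linarith
  have p₁ := stmt16_p c δ₁ ρ V₁ (ρ^2*V₁+σ2) hc hV₁ hA₁ e₁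
  have p₂ := stmt16_p c δ₂ ρ V₂ (ρ^2*V₂+σ2) hc hV₂ hA₂ e₂
  have p₁' : δ₁*ρ^2*V₂^2 < (ρ^2*V₂+σ2)^2 := by
    have h0 : 0 ≤ (δ₂-δ₁)*(ρ^2*V₂^2) :=
      mul_nonneg (le_of_lt (sub_pos.2 h12)) (by positivity)
    linarith [p₂, h0]
  have hVA₂ := stmt16_VA ρ σ2 c δ₂ V₂ hρ0 hρ2 hσ hc hδ₂0 hδρ₂ hV₂ e₂ hcost₂
  have hVlt := stmt16_Vlt ρ c δ₁ δ₂ V₁ V₂ (ρ^2*V₁+σ2) (ρ^2*V₂+σ2) hρ0 hc hδ₁ h12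
    hV₁ hV₂ hA₁ hA₂ hAd q₁ q₂ p₁ p₁' e₁ e₂
  have hQ := stmt16_Q ρ c δ₁ δ₂ V₁ V₂ (ρ^2*V₁+σ2) (ρ^2*V₂+σ2) hρ0 hρ1 hc hδ₁ h12 hδ₂
    hV₁ hV₂ hA₁ hA₂ hAd q₁ hVA₂ e₁ e₂
  have hdiff : C₁ - C₂ = (V₁-V₂)*(V₁*V₂*(ρ^2*V₁+σ2)*(ρ^2*V₂+σ2)
      + c*ρ^2*V₁*V₂ - c*(ρ^2*V₁+σ2)*(ρ^2*V₂+σ2))/(V₁*V₂*(ρ^2*V₁+σ2)*(ρ^2*V₂+σ2)) := by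
    rw [hC₁, hC₂, hx₁, hx₂]
    field_simp
    ring
  have hfin : 0 < C₁ - C₂ := by
    rw [hdiff]
    have hd : 0 < V₁ - V₂ := sub_pos.2 hVlt
    positivity
  linarith [hfin]
end

section
/- Let ρ ∈ (0,1), σ² > 0, δ ∈ [0,1), and let 0 < c₁ < c₂ with c_i < σ⁴/((1 − δρ²)(1 − ρ²)²) for i = 1,2. For i = 1,2 let V_i > 0 satisfy 1/(V_i)² − δρ²/(ρ²V_i + σ²)² = 1/c_i, set x_i = 1/V_i − 1/(ρ²V_i + σ²) and C_i = V_i + c_i·x_i. Then C₁ < C₂; that is, the steady-state cost is strictly increasing in the marginal precision cost. -/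
set_option maxHeartbeats 1600000 in
/-- Under assumption (8), the steady-state cost C* = V* + c·x* is
strictly increasing in the marginal precision cost c. -/
theorem stmt_17 (ρ σ2 δ : ℝ) (hρ0 : 0 < ρ) (hρ1 : ρ < 1) (hσ : 0 < σ2)
    (hδ0 : 0 ≤ δ) (hδ1 : δ < 1)
    (c₁ c₂ : ℝ) (hc₁ : 0 < c₁) (h12 : c₁ < c₂)
    (hcost₁ : c₁ < σ2 ^ 2 / ((1 - δ * ρ ^ 2) * (1 - ρ ^ 2) ^ 2))
    (hcost₂ : c₂ < σ2 ^ 2 / ((1 - δ * ρ ^ 2) * (1 - ρ ^ 2) ^ 2))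
    (V₁ V₂ : ℝ) (hV₁ : 0 < V₁) (hV₂ : 0 < V₂)
    (hfoc₁ : 1 / V₁ ^ 2 - δ * ρ ^ 2 / (ρ ^ 2 * V₁ + σ2) ^ 2 = 1 / c₁)
    (hfoc₂ : 1 / V₂ ^ 2 - δ * ρ ^ 2 / (ρ ^ 2 * V₂ + σ2) ^ 2 = 1 / c₂)
    (x₁ x₂ C₁ C₂ : ℝ)
    (hx₁ : x₁ = 1 / V₁ - 1 / (ρ ^ 2 * V₁ + σ2))
    (hx₂ : x₂ = 1 / V₂ - 1 / (ρ ^ 2 * V₂ + σ2))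
    (hC₁ : C₁ = V₁ + c₁ * x₁) (hC₂ : C₂ = V₂ + c₂ * x₂) :
    C₁ < C₂ := by
  have hc₂ : 0 < c₂ := hc₁.trans h12
  obtain ⟨B₁, hB₁def⟩ : ∃ B : ℝ, B = ρ ^ 2 * V₁ + σ2 := ⟨_, rfl⟩
  obtain ⟨B₂, hB₂def⟩ : ∃ B : ℝ, B = ρ ^ 2 * V₂ + σ2 := ⟨_, rfl⟩
  rw [← hB₁def] at hfoc₁ hx₁
  rw [← hB₂def] at hfoc₂ hx₂
  have hB₁ : 0 < B₁ := by
    have := mul_pos (mul_pos hρ0 hρ0) hV₁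
    rw [hB₁def]; linarith
  have hB₂ : 0 < B₂ := by
    have := mul_pos (mul_pos hρ0 hρ0) hV₂
    rw [hB₂def]; linarith
  have hV₁' : V₁ ≠ 0 := ne_of_gt hV₁
  have hV₂' : V₂ ≠ 0 := ne_of_gt hV₂
  have hB₁' : B₁ ≠ 0 := ne_of_gt hB₁
  have hB₂' : B₂ ≠ 0 := ne_of_gt hB₂
  have hc₁' : c₁ ≠ 0 := ne_of_gt hc₁
  have hc₂' : c₂ ≠ 0 := ne_of_gt hc₂
  have hρ2 : ρ ^ 2 < 1 := by
    have h := mul_lt_mul_of_pos_left hρ1 hρ0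
    have h2 := mul_lt_mul_of_pos_right hρ1 one_pos
    calc ρ ^ 2 = ρ * ρ := sq ρ
      _ < ρ * 1 := mul_lt_mul_of_pos_left hρ1 hρ0
      _ = ρ := mul_one ρ
      _ < 1 := hρ1
  have hδρ2 : δ * ρ ^ 2 < 1 := by
    have h := mul_le_mul_of_nonneg_left hρ2.le hδ0
    have : δ * ρ ^ 2 ≤ δ := by linarith [h, mul_one δ]
    linarith
  -- key polynomial form of the FOCs
  have hkey₁ : c₁ * (B₁ ^ 2 - δ * ρ ^ 2 * V₁ ^ 2) = V₁ ^ 2 * B₁ ^ 2 := by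
    field_simp at hfoc₁
    linear_combination hfoc₁
  have hkey₂ : c₂ * (B₂ ^ 2 - δ * ρ ^ 2 * V₂ ^ 2) = V₂ ^ 2 * B₂ ^ 2 := by
    field_simp at hfoc₂
    linear_combination hfoc₂
  clear hfoc₁ hfoc₂ hcost₁
  have hD₁ : 0 < B₁ ^ 2 - δ * ρ ^ 2 * V₁ ^ 2 := by
    by_contra h
    push_neg at h
    have h1 : c₁ * (B₁ ^ 2 - δ * ρ ^ 2 * V₁ ^ 2) ≤ 0 :=
      mul_nonpos_of_nonneg_of_nonpos hc₁.le h
    have h2 : 0 < V₁ ^ 2 * B₁ ^ 2 := mul_pos (pow_pos hV₁ 2) (pow_pos hB₁ 2)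
    linarith [hkey₁ ▸ h1]
  have hD₂ : 0 < B₂ ^ 2 - δ * ρ ^ 2 * V₂ ^ 2 := by
    by_contra h
    push_neg at h
    have h1 : c₂ * (B₂ ^ 2 - δ * ρ ^ 2 * V₂ ^ 2) ≤ 0 :=
      mul_nonpos_of_nonneg_of_nonpos hc₂.le h
    have h2 : 0 < V₂ ^ 2 * B₂ ^ 2 := mul_pos (pow_pos hV₂ 2) (pow_pos hB₂ 2)
    linarith [hkey₂ ▸ h1]
  -- assumption (8) forces V₂ below σ2/(1-ρ²)
  have hreg₂ : (1 - ρ ^ 2) * V₂ < σ2 := by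
    by_contra h
    push_neg at h
    have hpos : 0 < (1 - δ * ρ ^ 2) * (1 - ρ ^ 2) ^ 2 :=
      mul_pos (by linarith) (pow_pos (by linarith) 2)
    have hc' : c₂ * ((1 - δ * ρ ^ 2) * (1 - ρ ^ 2) ^ 2) < σ2 ^ 2 :=
      (lt_div_iff₀ hpos).mp hcost₂
    have hBle : B₂ ≤ V₂ := by rw [hB₂def]; linarith
    have h2 : σ2 ^ 2 ≤ ((1 - ρ ^ 2) * V₂) ^ 2 := by
      have := mul_le_mul h h hσ.le (hσ.le.trans h)
      linarith [this]
    have m1 : c₂ * ((1 - δ * ρ ^ 2) * (1 - ρ ^ 2) ^ 2) * (B₂ ^ 2 - δ * ρ ^ 2 * V₂ ^ 2)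
        < σ2 ^ 2 * (B₂ ^ 2 - δ * ρ ^ 2 * V₂ ^ 2) :=
      mul_lt_mul_of_pos_right hc' hD₂
    have m2 : c₂ * ((1 - δ * ρ ^ 2) * (1 - ρ ^ 2) ^ 2) * (B₂ ^ 2 - δ * ρ ^ 2 * V₂ ^ 2)
        = (1 - δ * ρ ^ 2) * (1 - ρ ^ 2) ^ 2 * (V₂ ^ 2 * B₂ ^ 2) := by
      linear_combination ((1 - δ * ρ ^ 2) * (1 - ρ ^ 2) ^ 2) * hkey₂
    have m3 : σ2 ^ 2 * ((1 - δ * ρ ^ 2) * B₂ ^ 2)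
        ≤ ((1 - ρ ^ 2) * V₂) ^ 2 * ((1 - δ * ρ ^ 2) * B₂ ^ 2) :=
      mul_le_mul_of_nonneg_right h2
        (mul_nonneg (by linarith) (sq_nonneg B₂))
    have m4 : σ2 ^ 2 * (B₂ ^ 2 - δ * ρ ^ 2 * V₂ ^ 2) ≤ σ2 ^ 2 * ((1 - δ * ρ ^ 2) * B₂ ^ 2) := by
      have hBB : B₂ * B₂ ≤ V₂ * V₂ := mul_self_le_mul_self hB₂.le hBle
      have hnn : 0 ≤ δ * ρ ^ 2 * (V₂ ^ 2 - B₂ ^ 2) :=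
        mul_nonneg (by positivity) (by linarith [hBB])
      linarith [mul_nonneg (sq_nonneg σ2) hnn]
    linarith [m1, m2, m3, m4]
  -- V₁ < V₂ from monotonicity of the FOC map
  have hV12 : V₁ < V₂ := by
    by_contra h
    push_neg at h
    have t1 : 0 < V₁ * B₂ ^ 2 * (B₁ ^ 2 - δ * ρ ^ 2 * V₁ ^ 2) :=
      mul_pos (mul_pos hV₁ (pow_pos hB₂ 2)) hD₁
    have t2 : 0 < V₂ * B₁ ^ 2 * (B₂ ^ 2 - δ * ρ ^ 2 * V₂ ^ 2) :=
      mul_pos (mul_pos hV₂ (pow_pos hB₁ 2)) hD₂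
    have t3 : 0 ≤ δ * (ρ ^ 2) ^ 2 * σ2 * V₁ * V₂ * (V₂ - V₁) ^ 2 := by positivity
    have t4 : 0 ≤ δ * ρ ^ 2 * σ2 * (V₁ ^ 3 * B₂ + V₂ ^ 3 * B₁) := by
      apply mul_nonneg (by positivity)
      have h1 := mul_nonneg (pow_nonneg hV₁.le 3) hB₂.le
      have h2 := mul_nonneg (pow_nonneg hV₂.le 3) hB₁.le
      linarith
    have hE : 0 < (V₁ + V₂) * (B₁ ^ 2 * B₂ ^ 2)
        - δ * (ρ ^ 2) ^ 2 * (B₁ + B₂) * (V₁ ^ 2 * V₂ ^ 2) := by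
      have hid : (V₁ + V₂) * (B₁ ^ 2 * B₂ ^ 2)
          - δ * (ρ ^ 2) ^ 2 * (B₁ + B₂) * (V₁ ^ 2 * V₂ ^ 2)
          = V₁ * B₂ ^ 2 * (B₁ ^ 2 - δ * ρ ^ 2 * V₁ ^ 2)
            + V₂ * B₁ ^ 2 * (B₂ ^ 2 - δ * ρ ^ 2 * V₂ ^ 2)
            + δ * (ρ ^ 2) ^ 2 * σ2 * V₁ * V₂ * (V₂ - V₁) ^ 2
            + δ * ρ ^ 2 * σ2 * (V₁ ^ 3 * B₂ + V₂ ^ 3 * B₁) := by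
        rw [hB₁def, hB₂def]; ring
      rw [hid]; linarith
    have e1 : c₁ * ((B₁ ^ 2 - δ * ρ ^ 2 * V₁ ^ 2) * (B₂ ^ 2 - δ * ρ ^ 2 * V₂ ^ 2))
        = V₁ ^ 2 * B₁ ^ 2 * (B₂ ^ 2 - δ * ρ ^ 2 * V₂ ^ 2) := by
      linear_combination (B₂ ^ 2 - δ * ρ ^ 2 * V₂ ^ 2) * hkey₁
    have e2 : c₂ * ((B₁ ^ 2 - δ * ρ ^ 2 * V₁ ^ 2) * (B₂ ^ 2 - δ * ρ ^ 2 * V₂ ^ 2))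
        = V₂ ^ 2 * B₂ ^ 2 * (B₁ ^ 2 - δ * ρ ^ 2 * V₁ ^ 2) := by
      linear_combination (B₁ ^ 2 - δ * ρ ^ 2 * V₁ ^ 2) * hkey₂
    have e3 : V₂ ^ 2 * B₂ ^ 2 * (B₁ ^ 2 - δ * ρ ^ 2 * V₁ ^ 2)
        - V₁ ^ 2 * B₁ ^ 2 * (B₂ ^ 2 - δ * ρ ^ 2 * V₂ ^ 2)
        = (V₂ - V₁) * ((V₁ + V₂) * (B₁ ^ 2 * B₂ ^ 2)
          - δ * (ρ ^ 2) ^ 2 * (B₁ + B₂) * (V₁ ^ 2 * V₂ ^ 2)) := by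
      rw [hB₁def, hB₂def]; ring
    have e4 : (V₂ - V₁) * ((V₁ + V₂) * (B₁ ^ 2 * B₂ ^ 2)
        - δ * (ρ ^ 2) ^ 2 * (B₁ + B₂) * (V₁ ^ 2 * V₂ ^ 2)) ≤ 0 :=
      mul_nonpos_of_nonpos_of_nonneg (by linarith) hE.le
    have e5 : 0 < (c₂ - c₁) * ((B₁ ^ 2 - δ * ρ ^ 2 * V₁ ^ 2) * (B₂ ^ 2 - δ * ρ ^ 2 * V₂ ^ 2)) :=
      mul_pos (sub_pos.2 h12) (mul_pos hD₁ hD₂)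
    linarith [e1, e2, e3, e4, e5]
  -- x₂ > 0
  have hVB₂ : V₂ < B₂ := by rw [hB₂def]; linarith
  have hx₂pos : 0 < x₂ := by
    rw [hx₂]
    have := one_div_lt_one_div_of_lt hV₂ hVB₂
    linarith
  -- convexity-type bound
  have hq : ρ ^ 2 * V₁ < B₁ := by rw [hB₁def]; linarith
  have h7 : 0 < B₁ ^ 2 * B₂ - (ρ ^ 2) ^ 2 * V₁ ^ 2 * V₂ := by
    have p1 : 0 < B₁ ^ 2 * (B₂ - V₂) := mul_pos (pow_pos hB₁ 2) (sub_pos.2 hVB₂)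
    have p2 : 0 < V₂ * ((B₁ - ρ ^ 2 * V₁) * (B₁ + ρ ^ 2 * V₁)) := by
      apply mul_pos hV₂
      apply mul_pos (sub_pos.2 hq)
      have : 0 < ρ ^ 2 * V₁ := by positivity
      linarith
    linarith [p1, p2]
  have hx₁m : x₁ * (V₁ * B₁) = B₁ - V₁ := by
    rw [hx₁]; field_simp
  have hx₂m : x₂ * (V₂ * B₂) = B₂ - V₂ := by
    rw [hx₂]; field_simp
  have h5 : (x₁ - x₂) * (V₁ * B₁ * (V₂ * B₂))
      = (V₂ - V₁) * (B₁ * B₂ - ρ ^ 2 * (V₁ * V₂)) := by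
    have hBB : B₂ - B₁ = ρ ^ 2 * (V₂ - V₁) := by rw [hB₁def, hB₂def]; ring
    linear_combination (V₂ * B₂) * hx₁m - (V₁ * B₁) * hx₂m - V₁ * V₂ * hBB
  have h6 : V₁ * B₁ * (B₁ * B₂ - ρ ^ 2 * (V₁ * V₂)) ≤ V₂ * B₂ * (B₁ ^ 2 - ρ ^ 2 * V₁ ^ 2) := by
    have hd : V₂ * B₂ * (B₁ ^ 2 - ρ ^ 2 * V₁ ^ 2)
        - V₁ * B₁ * (B₁ * B₂ - ρ ^ 2 * (V₁ * V₂))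
        = (V₂ - V₁) * (B₁ ^ 2 * B₂ - (ρ ^ 2) ^ 2 * V₁ ^ 2 * V₂) := by
      rw [hB₁def, hB₂def]; ring
    linarith [hd, mul_pos (sub_pos.2 hV12) h7]
  -- main chain
  have hK : 0 < V₁ * B₁ * (V₂ * B₂) * (V₁ * B₁) :=
    mul_pos (mul_pos (mul_pos hV₁ hB₁) (mul_pos hV₂ hB₂)) (mul_pos hV₁ hB₁)
  have f1 : c₁ * (x₁ - x₂) * (V₁ * B₁ * (V₂ * B₂) * (V₁ * B₁))
      = c₁ * (V₁ * B₁) * ((V₂ - V₁) * (B₁ * B₂ - ρ ^ 2 * (V₁ * V₂))) := by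
    linear_combination (c₁ * (V₁ * B₁)) * h5
  have hcΔ : 0 ≤ c₁ * (V₂ - V₁) := mul_nonneg hc₁.le (sub_pos.2 hV12).le
  have f2 : c₁ * (V₂ - V₁) * (V₁ * B₁ * (B₁ * B₂ - ρ ^ 2 * (V₁ * V₂)))
      ≤ c₁ * (V₂ - V₁) * (V₂ * B₂ * (B₁ ^ 2 - ρ ^ 2 * V₁ ^ 2)) :=
    mul_le_mul_of_nonneg_left h6 hcΔ
  have f3 : c₁ * (V₂ - V₁) * (V₂ * B₂ * (B₁ ^ 2 - ρ ^ 2 * V₁ ^ 2))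
      = (V₂ - V₁) * (V₂ * B₂) * (V₁ ^ 2 * B₁ ^ 2 - (1 - δ) * ρ ^ 2 * V₁ ^ 2 * c₁) := by
    linear_combination ((V₂ - V₁) * (V₂ * B₂)) * hkey₁
  have h1δ : (0:ℝ) < 1 - δ := by linarith
  have f4 : 0 < (V₂ - V₁) * (V₂ * B₂) * ((1 - δ) * ρ ^ 2 * V₁ ^ 2 * c₁) :=
    mul_pos (mul_pos (sub_pos.2 hV12) (mul_pos hV₂ hB₂))
      (mul_pos (mul_pos (mul_pos h1δ (pow_pos hρ0 2)) (pow_pos hV₁ 2)) hc₁)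
  have h9' : c₁ * (x₁ - x₂) * (V₁ * B₁ * (V₂ * B₂) * (V₁ * B₁))
      < (V₂ - V₁) * (V₁ * B₁ * (V₂ * B₂) * (V₁ * B₁)) := by
    linarith [f1, f2, f3, f4]
  have h9 : c₁ * (x₁ - x₂) < V₂ - V₁ :=
    lt_of_mul_lt_mul_right h9' hK.le
  have hA : 0 < (c₂ - c₁) * x₂ := mul_pos (sub_pos.2 h12) hx₂pos
  rw [hC₁, hC₂]
  linarith [h9, hA]
end

section
/- Let ρ ∈ (0,1), c > 0, δ ∈ [0,1), and let 0 < s₁ < s₂ (two values of the shock variance σ²) with c < s_i²/((1 − δρ²)(1 − ρ²)²) for i = 1,2. For i = 1,2 let V_i > 0 satisfy 1/(V_i)² − δρ²/(ρ²V_i + s_i)² = 1/c, set x_i = 1/V_i − 1/(ρ²V_i + s_i) and C_i = V_i + c·x_i. Then C₁ < C₂; that is, the steady-state cost is strictly increasing in the shock variance. -/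
set_option maxHeartbeats 1000000 in
/-- Under assumption (8), the steady-state cost C* = V* + c·x* is
strictly increasing in the shock variance σ². -/
theorem stmt_18 (ρ c δ : ℝ) (hρ0 : 0 < ρ) (hρ1 : ρ < 1) (hc : 0 < c)
    (hδ0 : 0 ≤ δ) (hδ1 : δ < 1)
    (s₁ s₂ : ℝ) (hs₁ : 0 < s₁) (h12 : s₁ < s₂)
    (hcost₁ : c < s₁ ^ 2 / ((1 - δ * ρ ^ 2) * (1 - ρ ^ 2) ^ 2))
    (hcost₂ : c < s₂ ^ 2 / ((1 - δ * ρ ^ 2) * (1 - ρ ^ 2) ^ 2))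
    (V₁ V₂ : ℝ) (hV₁ : 0 < V₁) (hV₂ : 0 < V₂)
    (hfoc₁ : 1 / V₁ ^ 2 - δ * ρ ^ 2 / (ρ ^ 2 * V₁ + s₁) ^ 2 = 1 / c)
    (hfoc₂ : 1 / V₂ ^ 2 - δ * ρ ^ 2 / (ρ ^ 2 * V₂ + s₂) ^ 2 = 1 / c)
    (x₁ x₂ C₁ C₂ : ℝ)
    (hx₁ : x₁ = 1 / V₁ - 1 / (ρ ^ 2 * V₁ + s₁))
    (hx₂ : x₂ = 1 / V₂ - 1 / (ρ ^ 2 * V₂ + s₂))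
    (hC₁ : C₁ = V₁ + c * x₁) (hC₂ : C₂ = V₂ + c * x₂) :
    C₁ < C₂ := by
  clear hcost₁ hcost₂
  have hs₂ : 0 < s₂ := hs₁.trans h12
  obtain ⟨W₁, hW₁e⟩ : ∃ w : ℝ, w = ρ ^ 2 * V₁ + s₁ := ⟨_, rfl⟩
  obtain ⟨W₂, hW₂e⟩ : ∃ w : ℝ, w = ρ ^ 2 * V₂ + s₂ := ⟨_, rfl⟩
  rw [← hW₁e] at hfoc₁ hx₁
  rw [← hW₂e] at hfoc₂ hx₂
  have hW₁ : 0 < W₁ := by rw [hW₁e]; positivity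
  have hW₂ : 0 < W₂ := by rw [hW₂e]; positivity
  have e1 : s₁ = W₁ - ρ ^ 2 * V₁ := by rw [hW₁e]; ring
  have e2 : s₂ = W₂ - ρ ^ 2 * V₂ := by rw [hW₂e]; ring
  -- polynomial form of the FOCs
  have key₁ : c * (W₁ ^ 2 - δ * ρ ^ 2 * V₁ ^ 2) = V₁ ^ 2 * W₁ ^ 2 := by
    have h1 : V₁ ^ 2 ≠ 0 := by positivity
    have h2 : W₁ ^ 2 ≠ 0 := by positivity
    have h3 : c ≠ 0 := hc.ne'
    field_simp at hfoc₁
    linear_combination hfoc₁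
  have key₂ : c * (W₂ ^ 2 - δ * ρ ^ 2 * V₂ ^ 2) = V₂ ^ 2 * W₂ ^ 2 := by
    have h1 : V₂ ^ 2 ≠ 0 := by positivity
    have h2 : W₂ ^ 2 ≠ 0 := by positivity
    have h3 : c ≠ 0 := hc.ne'
    field_simp at hfoc₂
    linear_combination hfoc₂
  clear hfoc₁ hfoc₂
  -- basic facts
  have hq₁ : δ * ρ ^ 2 * V₁ ^ 2 < W₁ ^ 2 := by
    nlinarith [mul_pos (pow_pos hV₁ 2) (pow_pos hW₁ 2)]
  have hq₂ : δ * ρ ^ 2 * V₂ ^ 2 < W₂ ^ 2 := by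
    nlinarith [mul_pos (pow_pos hV₂ 2) (pow_pos hW₂ 2)]
  have u1 : ρ ^ 2 * V₁ < W₁ := by rw [hW₁e]; nlinarith
  have u2 : ρ ^ 2 * V₂ < W₂ := by rw [hW₂e]; nlinarith
  have hr₁ : δ * ρ ^ 2 * V₁ < W₁ := by nlinarith [mul_pos (pow_pos hρ0 2) hV₁]
  have hr₂ : δ * ρ ^ 2 * V₂ < W₂ := by nlinarith [mul_pos (pow_pos hρ0 2) hV₂]
  -- difference identity between the two FOCs
  have rel : (V₁ - V₂) * ((V₁ + V₂) * W₁ ^ 2 * W₂ ^ 2)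
      = (W₁ - W₂) * (δ * ρ ^ 2 * (W₁ + W₂) * V₁ ^ 2 * V₂ ^ 2) := by
    linear_combination (W₁ ^ 2 - δ * ρ ^ 2 * V₁ ^ 2) * key₂
      - (W₂ ^ 2 - δ * ρ ^ 2 * V₂ ^ 2) * key₁
  have hP : 0 < (V₁ + V₂) * W₁ ^ 2 * W₂ ^ 2 := by positivity
  have hQ : 0 ≤ δ * ρ ^ 2 * (W₁ + W₂) * V₁ ^ 2 * V₂ ^ 2 := by positivity
  -- ineqA : ρ² Q < P
  have ineqA : ρ ^ 2 * (δ * ρ ^ 2 * (W₁ + W₂) * V₁ ^ 2 * V₂ ^ 2)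
      < (V₁ + V₂) * W₁ ^ 2 * W₂ ^ 2 := by
    have g1 : 0 < W₁ * V₁ ^ 2 := by positivity
    have g2 : 0 < W₂ * V₂ ^ 2 := by positivity
    have t1 : ρ ^ 2 * (δ * ρ ^ 2 * V₂ ^ 2) * (W₁ * V₁ ^ 2)
        < ρ ^ 2 * W₂ ^ 2 * (W₁ * V₁ ^ 2) := by
      linarith [mul_pos (mul_pos (pow_pos hρ0 2) g1) (sub_pos.mpr hq₂)]
    have t2 : ρ ^ 2 * (δ * ρ ^ 2 * V₁ ^ 2) * (W₂ * V₂ ^ 2)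
        < ρ ^ 2 * W₁ ^ 2 * (W₂ * V₂ ^ 2) := by
      linarith [mul_pos (mul_pos (pow_pos hρ0 2) g2) (sub_pos.mpr hq₁)]
    have t3 : ρ ^ 2 * W₂ ^ 2 * (W₁ * V₁ ^ 2) ≤ W₁ ^ 2 * W₂ ^ 2 * V₁ := by
      linarith [mul_pos (mul_pos (mul_pos hW₁ hV₁) (pow_pos hW₂ 2)) (sub_pos.mpr u1)]
    have t4 : ρ ^ 2 * W₁ ^ 2 * (W₂ * V₂ ^ 2) ≤ W₁ ^ 2 * W₂ ^ 2 * V₂ := by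
      linarith [mul_pos (mul_pos (mul_pos hW₂ hV₂) (pow_pos hW₁ 2)) (sub_pos.mpr u2)]
    linarith [t1, t2, t3, t4]
  -- W₁ < W₂
  have hsum : (s₂ - s₁) * ((V₁ + V₂) * W₁ ^ 2 * W₂ ^ 2)
      = (W₂ - W₁) * ((V₁ + V₂) * W₁ ^ 2 * W₂ ^ 2
          - ρ ^ 2 * (δ * ρ ^ 2 * (W₁ + W₂) * V₁ ^ 2 * V₂ ^ 2)) := by
    rw [e1, e2]
    linear_combination ρ ^ 2 * rel
  have hPQ : 0 < (V₁ + V₂) * W₁ ^ 2 * W₂ ^ 2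
      - ρ ^ 2 * (δ * ρ ^ 2 * (W₁ + W₂) * V₁ ^ 2 * V₂ ^ 2) := by linarith
  have hW12 : W₁ < W₂ := by
    by_contra hcon
    push_neg at hcon
    have h2 : (W₂ - W₁) * ((V₁ + V₂) * W₁ ^ 2 * W₂ ^ 2
        - ρ ^ 2 * (δ * ρ ^ 2 * (W₁ + W₂) * V₁ ^ 2 * V₂ ^ 2)) ≤ 0 :=
      mul_nonpos_of_nonpos_of_nonneg (by linarith) hPQ.le
    have h3 := mul_pos (sub_pos.mpr h12) hP
    linarith [hsum]
  have hV12 : V₁ ≤ V₂ := by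
    have h' : (W₁ - W₂) * (δ * ρ ^ 2 * (W₁ + W₂) * V₁ ^ 2 * V₂ ^ 2) ≤ 0 :=
      mul_nonpos_of_nonpos_of_nonneg (by linarith) hQ
    by_contra hcon
    push_neg at hcon
    have h'' := mul_pos (sub_pos.mpr hcon) hP
    linarith [rel]
  -- (c - V₁V₂) W₁² ≤ c δρ² V₁²
  have e₁ : (c - V₁ ^ 2) * W₁ ^ 2 = c * (δ * ρ ^ 2) * V₁ ^ 2 := by
    linear_combination key₁
  have h1 : (c - V₁ * V₂) * W₁ ^ 2 ≤ c * (δ * ρ ^ 2) * V₁ ^ 2 := by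
    linarith [e₁, mul_nonneg (mul_nonneg hV₁.le (sub_nonneg.mpr hV12)) (sq_nonneg W₁)]
  -- core : δ²ρ⁴ (W₁+W₂) V₁³ V₂ < (V₁+V₂) W₁³ W₂
  have core : (δ * ρ ^ 2) ^ 2 * (W₁ + W₂) * V₁ ^ 3 * V₂ < (V₁ + V₂) * W₁ ^ 3 * W₂ := by
    have n1 : 0 ≤ δ * ρ ^ 2 * V₁ ^ 2 := by positivity
    have n2 : 0 ≤ δ * ρ ^ 2 * V₁ := by positivity
    have n3 : 0 ≤ δ * ρ ^ 2 * V₂ := by positivity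
    have c1 : (δ * ρ ^ 2 * V₁ ^ 2) * (δ * ρ ^ 2 * V₁) < W₁ ^ 2 * W₁ := by
      linarith [mul_pos (sub_pos.mpr hq₁) hW₁, mul_nonneg n1 (sub_pos.mpr hr₁).le]
    have c2 : (δ * ρ ^ 2 * V₁ ^ 2) * (δ * ρ ^ 2 * V₂) < W₁ ^ 2 * W₂ := by
      linarith [mul_pos (sub_pos.mpr hq₁) hW₂, mul_nonneg n1 (sub_pos.mpr hr₂).le]
    have d1 : (δ * ρ ^ 2) ^ 2 * V₁ ^ 3 * V₂ * W₂ < V₂ * W₁ ^ 3 * W₂ := by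
      linarith [mul_lt_mul_of_pos_left c1 (mul_pos hV₂ hW₂)]
    have d2 : (δ * ρ ^ 2) ^ 2 * V₁ ^ 3 * V₂ * W₁ < V₁ * W₁ ^ 3 * W₂ := by
      linarith [mul_lt_mul_of_pos_left c2 (mul_pos hV₁ hW₁)]
    linarith [d1, d2]
  -- bracket : c V₁ V₂ P - Q W₁ W₂ (c - V₁ V₂) > 0
  have bracket : 0 < c * V₁ * V₂ * ((V₁ + V₂) * W₁ ^ 2 * W₂ ^ 2)
      - (δ * ρ ^ 2 * (W₁ + W₂) * V₁ ^ 2 * V₂ ^ 2) * (W₁ * W₂) * (c - V₁ * V₂) := by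
    have coef : 0 ≤ δ * ρ ^ 2 * (W₁ + W₂) * V₁ ^ 2 * V₂ ^ 2 * W₂ := by positivity
    have step : (δ * ρ ^ 2 * (W₁ + W₂) * V₁ ^ 2 * V₂ ^ 2) * (W₁ * W₂) * (c - V₁ * V₂) * W₁
        ≤ (δ * ρ ^ 2 * (W₁ + W₂) * V₁ ^ 2 * V₂ ^ 2 * W₂) * (c * (δ * ρ ^ 2) * V₁ ^ 2) := by
      linarith [mul_le_mul_of_nonneg_left h1 coef]
    have fin : (δ * ρ ^ 2 * (W₁ + W₂) * V₁ ^ 2 * V₂ ^ 2 * W₂) * (c * (δ * ρ ^ 2) * V₁ ^ 2)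
        < c * V₁ * V₂ * ((V₁ + V₂) * W₁ ^ 2 * W₂ ^ 2) * W₁ := by
      have m : 0 < c * V₁ * V₂ * W₂ := by positivity
      linarith [mul_lt_mul_of_pos_left core m]
    by_contra hcon
    push_neg at hcon
    have hnp : (c * V₁ * V₂ * ((V₁ + V₂) * W₁ ^ 2 * W₂ ^ 2)
        - (δ * ρ ^ 2 * (W₁ + W₂) * V₁ ^ 2 * V₂ ^ 2) * (W₁ * W₂) * (c - V₁ * V₂)) * W₁ ≤ 0 :=
      mul_nonpos_of_nonpos_of_nonneg hcon hW₁.le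
    linarith [step, fin]
  -- assemble
  have hD : (C₂ - C₁) * (V₁ * V₂ * W₁ * W₂)
      = (V₂ - V₁) * (V₁ * V₂ * W₁ * W₂) + c * (V₁ - V₂) * (W₁ * W₂)
        + c * (W₂ - W₁) * (V₁ * V₂) := by
    rw [hC₁, hC₂, hx₁, hx₂]
    have h1 : V₁ ≠ 0 := hV₁.ne'
    have h2 : V₂ ≠ 0 := hV₂.ne'
    have h3 : W₁ ≠ 0 := hW₁.ne'
    have h4 : W₂ ≠ 0 := hW₂.ne'
    field_simp
    ring
  have hDP : ((V₂ - V₁) * (V₁ * V₂ * W₁ * W₂) + c * (V₁ - V₂) * (W₁ * W₂)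
        + c * (W₂ - W₁) * (V₁ * V₂)) * ((V₁ + V₂) * W₁ ^ 2 * W₂ ^ 2)
      = (W₂ - W₁) * (c * V₁ * V₂ * ((V₁ + V₂) * W₁ ^ 2 * W₂ ^ 2)
          - (δ * ρ ^ 2 * (W₁ + W₂) * V₁ ^ 2 * V₂ ^ 2) * (W₁ * W₂) * (c - V₁ * V₂)) := by
    linear_combination (c - V₁ * V₂) * (W₁ * W₂) * rel
  have hDpos : 0 < (V₂ - V₁) * (V₁ * V₂ * W₁ * W₂) + c * (V₁ - V₂) * (W₁ * W₂)
        + c * (W₂ - W₁) * (V₁ * V₂) := by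
    by_contra hcon
    push_neg at hcon
    have hnp := mul_nonpos_of_nonpos_of_nonneg hcon hP.le
    linarith [hDP, mul_pos (sub_pos.mpr hW12) bracket]
  have hfin : 0 < (C₂ - C₁) * (V₁ * V₂ * W₁ * W₂) := by rw [hD]; exact hDpos
  have hpos : 0 < V₁ * V₂ * W₁ * W₂ := by positivity
  by_contra hcon
  push_neg at hcon
  have hnp : (C₂ - C₁) * (V₁ * V₂ * W₁ * W₂) ≤ 0 :=
    mul_nonpos_of_nonpos_of_nonneg (by linarith) hpos.le
  linarith
end
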